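/- arXiv:0808.0058 — 9 statements merged into one kernel-verified Lean document; each statement's English description precedes it below -/
import Mathlib

section
/- Let R be a commutative noetherian ring. Then every coherent subcategory of the category of finitely generated R-modules is a Serre subcategory; that is, if P is an isomorphism-invariant predicate on finitely generated R-modules that is closed under kernels, cokernels and extensions, then P is also closed under submodules (and hence under quotient modules). -/
/-!
It suffices to show that `P M` implies `P (M ⧸ R ∙ x)`: quotients by finitely generated
submodules follow by adding generators one at a time, and submodules are kernels of quotient maps.
This is proved by noetherian induction on an ideal `I` annihilating `x`, so we may assume
`ann x = I`. If `I` is not prime, say `r * s ∈ I` with `r, s ∉ I`, pass through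
`M ⧸ R ∙ (r • x)`: both steps have strictly larger annihilators. If `I = p` is prime, restrict
to the `p`-torsion submodule (a kernel of `M → Mⁿ`) and split off its torsion `T` with respect to
the complement of `p`, which is the kernel of multiplication by a single `s ∉ p` and meets `R ∙ x`
trivially. On the torsion-free `R ⧸ p`-module `M ⧸ T` some functional `f` has `f x ≠ 0`; the
cokernel of `m ↦ f m • x` is the quotient by a submodule of `R ∙ x` containing `t • x` for some
`t ∉ p`, and what remains is a cyclic quotient with annihilator containing `p + (t)`.
-/

open Submodule LinearMap

structure IsCoherentSubcategory (R : Type u) [CommRing R]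
    (P : ∀ (M : Type u) [AddCommGroup M] [Module R M], Prop) : Prop where
  of_equiv : ∀ (M N : Type u) [AddCommGroup M] [Module R M] [AddCommGroup N] [Module R N]
    [Module.Finite R M] [Module.Finite R N], (M ≃ₗ[R] N) → P M → P N
  ker : ∀ (M N : Type u) [AddCommGroup M] [Module R M] [AddCommGroup N] [Module R N]
    [Module.Finite R M] [Module.Finite R N] (f : M →ₗ[R] N), P M → P N → P (LinearMap.ker f)
  coker : ∀ (M N : Type u) [AddCommGroup M] [Module R M] [AddCommGroup N] [Module R N]
    [Module.Finite R M] [Module.Finite R N] (f : M →ₗ[R] N), P M → P N → P (N ⧸ range f)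
  of_exact : ∀ (A B C : Type u) [AddCommGroup A] [Module R A] [AddCommGroup B] [Module R B]
    [AddCommGroup C] [Module R C] [Module.Finite R A] [Module.Finite R B] [Module.Finite R C]
    (f : A →ₗ[R] B) (g : B →ₗ[R] C), Function.Injective f → Function.Surjective g →
    range f = LinearMap.ker g → P A → P C → P B

section Domain

variable {D M : Type*} [CommRing D] [IsDomain D] [AddCommGroup M] [Module D M] [Module.Finite D M]

theorem exists_free_submodule_smul_mem :
    ∃ (F : Submodule D M) (a : D), Module.Free D F ∧ a ≠ 0 ∧ ∀ m : M, a • m ∈ F := by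
  classical
  obtain ⟨n, v, hv⟩ := Module.Finite.exists_fin (R := D) (M := M)
  obtain ⟨I, hI, hmax⟩ := exists_maximal_linearIndepOn D v
  have hmem (i : Fin n) : ∃ a : D, a ≠ 0 ∧ a • v i ∈ span D (v '' I) := by
    by_cases hi : i ∈ I
    · exact ⟨1, one_ne_zero, by rw [one_smul]; exact subset_span ⟨i, hi, rfl⟩⟩
    · exact hmax i hi
  choose a ha haI using hmem
  refine ⟨span D (v '' I), ∏ i, a i, ?_, Finset.prod_ne_zero_iff.mpr fun i _ ↦ ha i, ?_⟩
  · rw [Set.image_eq_range]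
    exact .of_basis (.span hI)
  · suffices ⊤ ≤ (span D (v '' I)).comap (lsmul D M (∏ i, a i)) from fun m ↦ this mem_top
    rw [← hv, span_le]
    rintro _ ⟨i, rfl⟩
    rw [SetLike.mem_coe, mem_comap, lsmul_apply, ← Finset.prod_erase_mul _ _ (Finset.mem_univ i),
      mul_smul]
    exact smul_mem _ _ (haI i)

theorem exists_linearMap_apply_ne_zero [Module.IsTorsionFree D M] {x : M} (hx : x ≠ 0) :
    ∃ f : M →ₗ[D] D, f x ≠ 0 := by
  obtain ⟨F, a, hF, ha, haF⟩ := exists_free_submodule_smul_mem (D := D) (M := M)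
  obtain ⟨φ, hφ⟩ : ∃ φ : Module.Dual D F, φ ⟨a • x, haF x⟩ ≠ 0 := by
    by_contra! h
    have hax := congrArg Subtype.val ((Module.forall_dual_apply_eq_zero_iff D _).mp h)
    exact smul_ne_zero ha hx hax
  exact ⟨φ ∘ₗ (lsmul D M a).codRestrict F haF, hφ⟩

end Domain

section

variable {R : Type u} [CommRing R] {M N : Type u} [AddCommGroup M] [Module R M]
  [AddCommGroup N] [Module R N]

theorem exists_forall_torsionBy_le [IsNoetherian R M] (S : Submonoid R) :
    ∃ s ∈ S, ∀ t ∈ S, torsionBy R M t ≤ torsionBy R M s := by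
  obtain ⟨_, ⟨s, hs, rfl⟩, hmax⟩ := set_has_maximal_iff_noetherian.mpr ‹_›
    (torsionBy R M '' S) ⟨_, _, S.one_mem, rfl⟩
  refine ⟨s, hs, fun t ht ↦ ?_⟩
  have hle {a b : R} : torsionBy R M b ≤ torsionBy R M (a * b) := fun m hm ↦ by
    rw [mem_torsionBy_iff] at hm ⊢
    rw [mul_smul, hm, smul_zero]
  have hst : torsionBy R M (t * s) = torsionBy R M s :=
    (eq_of_le_of_not_lt hle (hmax _ ⟨_, S.mul_mem ht hs, rfl⟩)).symm
  calc torsionBy R M t ≤ torsionBy R M (s * t) := hle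
    _ = torsionBy R M s := by rw [mul_comm, hst]

theorem exists_linearMap_quotient_apply_ne_zero [Module.Finite R M] {p : Ideal R} [p.IsPrime]
    (htors : Module.IsTorsionBySet R M p) (hfree : ∀ t ∉ p, ∀ m : M, t • m = 0 → m = 0)
    {x : M} (hx : x ≠ 0) : ∃ f : M →ₗ[R] R ⧸ p, f x ≠ 0 := by
  let := htors.module
  have := htors.isScalarTower (S := R)
  have := Module.Finite.of_restrictScalars_finite R (R ⧸ p) M
  have : Module.IsTorsionFree (R ⧸ p) M := .of_smul_eq_zero fun c m hcm ↦ by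
    obtain ⟨t, rfl⟩ := Ideal.Quotient.mk_surjective c
    rw [Ideal.Quotient.eq_zero_iff_mem, or_iff_not_imp_left]
    exact fun ht ↦ hfree t ht m hcm
  obtain ⟨f, hf⟩ := exists_linearMap_apply_ne_zero (D := R ⧸ p) hx
  exact ⟨f.restrictScalars R, hf⟩

theorem exists_ker_eq_torsionBySet {I : Ideal R} (hI : I.FG) :
    ∃ (n : ℕ) (f : M →ₗ[R] Fin n → M), LinearMap.ker f = torsionBySet R M I := by
  obtain ⟨n, v, hv⟩ := fg_iff_exists_fin_generating_family.mp hI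
  refine ⟨n, LinearMap.pi fun i ↦ lsmul R M (v i), ?_⟩
  ext m
  simp [← hv, ← torsionBySet_eq_torsionBySet_span, mem_torsionBySet_iff, funext_iff]

theorem annihilator_span_singleton_le_map (f : M →ₗ[R] N) (x : M) :
    (R ∙ x).annihilator ≤ (R ∙ f x).annihilator := by
  intro r hr
  rw [mem_annihilator_span_singleton] at hr ⊢
  rw [← map_smul, hr, map_zero]

noncomputable def quotientQuotientSpanSingletonEquiv (K : Submodule R M) (x : M) :
    ((M ⧸ K) ⧸ R ∙ K.mkQ x) ≃ₗ[R] M ⧸ (K ⊔ R ∙ x) :=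
  (quotEquivOfEq _ _ (by rw [Submodule.map_span, Set.image_singleton])).trans
    (quotientQuotientEquivQuotientSup K _)

end

def ClosedUnderCyclicQuotients {R : Type u} [CommRing R]
    (P : ∀ (M : Type u) [AddCommGroup M] [Module R M], Prop) (I : Ideal R) : Prop :=
  ∀ (M : Type u) [AddCommGroup M] [Module R M] [Module.Finite R M],
    P M → ∀ x : M, I ≤ (R ∙ x).annihilator → P (M ⧸ R ∙ x)

namespace IsCoherentSubcategory

variable {R : Type u} [CommRing R] {P : ∀ (M : Type u) [AddCommGroup M] [Module R M], Prop}
  {M N : Type u} [AddCommGroup M] [Module R M] [Module.Finite R M]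
  [AddCommGroup N] [Module R N] [Module.Finite R N]

theorem of_subsingleton (hP : IsCoherentSubcategory R P) [Subsingleton N] (hM : P M) : P N := by
  have : Subsingleton (LinearMap.ker (LinearMap.id : M →ₗ[R] M)) := by
    rw [ker_id]; infer_instance
  exact hP.of_equiv _ _ (.ofSubsingleton _ _) (hP.ker M M LinearMap.id hM hM)

theorem prod (hP : IsCoherentSubcategory R P) (hM : P M) (hN : P N) : P (M × N) :=
  hP.of_exact _ _ _ (inl R M N) (snd R M N) inl_injective snd_surjective (ker_snd R M N).symm hM hN

theorem pi (hP : IsCoherentSubcategory R P) (hM : P M) (n : ℕ) : P (Fin n → M) := by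
  induction n with
  | zero => exact hP.of_subsingleton hM
  | succ n ih => exact hP.of_equiv _ _ (Fin.consLinearEquiv R fun _ ↦ M) (hP.prod hM ih)

theorem quotient_sup (hP : IsCoherentSubcategory R P) {J : Ideal R}
    (hJ : ClosedUnderCyclicQuotients P J) {K : Submodule R M} (hK : P (M ⧸ K)) {x : M}
    (hx : J ≤ (R ∙ K.mkQ x).annihilator) : P (M ⧸ (K ⊔ R ∙ x)) :=
  hP.of_equiv _ _ (quotientQuotientSpanSingletonEquiv K x) (hJ _ hK _ hx)

theorem quotient_span_singleton_of_not_isPrime (hP : IsCoherentSubcategory R P) {I : Ideal R}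
    (hIH : ∀ J, I < J → ClosedUnderCyclicQuotients P J) (hI : ¬ I.IsPrime) (hM : P M) {x : M}
    (hx : (R ∙ x).annihilator = I) : P (M ⧸ R ∙ x) := by
  obtain hItop | ⟨r, hr, s, hs, hrs⟩ := Ideal.not_isPrime_iff.mp hI
  · obtain rfl : x = 0 := by
      rw [← one_smul R x, ← mem_annihilator_span_singleton, hx, hItop]; trivial
    exact hP.of_equiv _ _ (quotEquivOfEqBot _ (span_zero_singleton R)).symm hM
  have hsrx : (s * r) • x = 0 := by
    rw [← mem_annihilator_span_singleton, hx, mul_comm]; exact hrs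
  -- `r • x` is killed by `I + (s)`, and `x` is killed by `I + (r)` modulo `r • x`.
  have h₁ : P (M ⧸ R ∙ (r • x)) := by
    refine hIH _ (lt_sup_iff_notMem.mpr hs) M hM _ (sup_le ?_ ?_)
    · exact hx ▸ annihilator_span_singleton_le_map (lsmul R M r) x
    · rw [span_singleton_le_iff_mem, mem_annihilator_span_singleton, smul_smul, hsrx]
  have h₂ := hP.quotient_sup (hIH _ (lt_sup_iff_notMem.mpr hr)) h₁ (x := x) (sup_le ?_ ?_)
  · rwa [sup_eq_right.mpr ((span_singleton_le_iff_mem _ _).mpr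
      (smul_mem _ r (mem_span_singleton_self x)))] at h₂
  · exact hx ▸ annihilator_span_singleton_le_map _ x
  · rw [span_singleton_le_iff_mem, mem_annihilator_span_singleton, ← map_smul,
      mkQ_apply, Quotient.mk_eq_zero]
    exact mem_span_singleton_self _

theorem quotient_span_singleton_of_isTorsionFree (hP : IsCoherentSubcategory R P)
    {p : Ideal R} [p.IsPrime]
    (hIH : ∀ J, p < J → ClosedUnderCyclicQuotients P J) (htors : Module.IsTorsionBySet R M p)
    (hfree : ∀ t ∉ p, ∀ m : M, t • m = 0 → m = 0) (hM : P M) {x : M} (hx : x ≠ 0) :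
    P (M ⧸ R ∙ x) := by
  obtain ⟨f, hf⟩ := exists_linearMap_quotient_apply_ne_zero htors hfree hx
  obtain ⟨t, ht⟩ := Ideal.Quotient.mk_surjective (f x)
  have htp : t ∉ p := by rwa [← Ideal.Quotient.eq_zero_iff_mem, ht]
  have hpx : p ≤ LinearMap.ker (toSpanSingleton R M x) := fun r hr ↦ @htors x ⟨r, hr⟩
  -- `ψ m = f m • x` is an endomorphism with `t • x ∈ range ψ ≤ R ∙ x`.
  let ψ : M →ₗ[R] M := p.liftQ (toSpanSingleton R M x) hpx ∘ₗ f
  have hψx : ψ x = t • x := by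
    rw [comp_apply, ← ht]
    exact liftQ_apply p (toSpanSingleton R M x) t
  have hψ : range ψ ≤ R ∙ x := by
    rw [LinearMap.span_singleton_eq_range, ← range_liftQ p _ hpx]
    exact range_comp_le_range _ _
  have h := hP.quotient_sup (hIH _ (lt_sup_iff_notMem.mpr htp)) (hP.coker M M ψ hM hM)
    (x := x) (sup_le ?_ ?_)
  · rwa [sup_eq_right.mpr hψ] at h
  · exact fun r hr ↦ (mem_annihilator_span_singleton _ r).mpr (by
      rw [← map_smul, @htors x ⟨r, hr⟩, map_zero])
  · rw [span_singleton_le_iff_mem, mem_annihilator_span_singleton, ← map_smul, ← hψx,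
      mkQ_apply, Quotient.mk_eq_zero]
    exact mem_range_self ψ x

variable [IsNoetherianRing R]

theorem quotient_ker (hP : IsCoherentSubcategory R P) (f : M →ₗ[R] N) (hM : P M) (hN : P N) :
    P (M ⧸ LinearMap.ker f) := by
  have hcoker := hP.coker M N f hM hN
  exact hP.of_equiv _ _ ((LinearEquiv.ofEq _ _ (ker_mkQ (range f))).trans
    f.quotKerEquivRange.symm) (hP.ker _ _ (range f).mkQ hN hcoker)

theorem of_quotient_sup (hP : IsCoherentSubcategory R P) (K L : Submodule R M)
    (hL : P (L ⧸ K.submoduleOf L)) (hKL : P (M ⧸ (K ⊔ L))) : P (M ⧸ K) := by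
  refine hP.of_exact _ _ _ (mapQ (K.comap L.subtype) K L.subtype le_rfl)
    (K.mapQ (K ⊔ L) LinearMap.id le_sup_left) ?_ ?_ ?_ hL hKL
  · rw [← ker_eq_bot, ker_mapQ]
    exact mkQ_map_self _
  · exact factor_surjective le_sup_left
  · simp [range_mapQ, ker_mapQ, Submodule.map_sup, mkQ_map_self]

theorem torsionBySet_and_quotient (hP : IsCoherentSubcategory R P) (hM : P M) (I : Ideal R) :
    P (torsionBySet R M I) ∧ P (M ⧸ torsionBySet R M I) := by
  obtain ⟨n, f, hf⟩ := exists_ker_eq_torsionBySet (M := M) (IsNoetherian.noetherian I)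
  rw [← hf]
  exact ⟨hP.ker _ _ f hM (hP.pi hM n), hP.quotient_ker f hM (hP.pi hM n)⟩

theorem quotient_span_singleton_of_isTorsionBySet (hP : IsCoherentSubcategory R P)
    {p : Ideal R} [p.IsPrime]
    (hIH : ∀ J, p < J → ClosedUnderCyclicQuotients P J) (htors : Module.IsTorsionBySet R M p)
    (hM : P M) {x : M} (hx : (R ∙ x).annihilator = p) : P (M ⧸ R ∙ x) := by
  have hxp (r : R) : r • x = 0 ↔ r ∈ p := by rw [← mem_annihilator_span_singleton, hx]
  -- `T` is the torsion of `M` with respect to the complement of `p`; it meets `R ∙ x` trivially.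
  obtain ⟨s, hs, hsT⟩ := exists_forall_torsionBy_le (M := M) p.primeCompl
  set T := torsionBy R M s
  have hT : P T := hP.ker M M _ hM hM
  have hfree (t : R) (ht : t ∉ p) (m : M ⧸ T) (htm : t • m = 0) : m = 0 := by
    obtain ⟨m, rfl⟩ := T.mkQ_surjective m
    rw [← map_smul, mkQ_apply, Quotient.mk_eq_zero, mem_torsionBy_iff, smul_smul] at htm
    exact (Quotient.mk_eq_zero T).mpr (hsT _ (p.primeCompl.mul_mem hs ht) htm)
  have hxT : T.mkQ x ≠ 0 := by
    rw [mkQ_apply, Ne, Quotient.mk_eq_zero, mem_torsionBy_iff, hxp]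
    exact hs
  have hTx : (R ∙ x).submoduleOf T = ⊥ := by
    refine eq_bot_iff.mpr fun ⟨m, hmT⟩ hm ↦ ?_
    obtain ⟨r, rfl⟩ := mem_span_singleton.mp hm
    rw [mem_torsionBy_iff, smul_smul, hxp] at hmT
    rw [mem_bot, Subtype.ext_iff, ZeroMemClass.coe_zero, hxp]
    exact (Ideal.IsPrime.mem_or_mem ‹_› hmT).resolve_left hs
  refine hP.of_quotient_sup (R ∙ x) T (hP.of_equiv _ _ (quotEquivOfEqBot _ hTx).symm hT) ?_
  rw [sup_comm]
  exact hP.of_equiv _ _ (quotientQuotientSpanSingletonEquiv T x)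
    (hP.quotient_span_singleton_of_isTorsionFree hIH (htors.quotient T) hfree
      (hP.quotient_ker _ hM hM) hxT)

theorem quotient_span_singleton_of_isPrime (hP : IsCoherentSubcategory R P)
    {p : Ideal R} [p.IsPrime]
    (hIH : ∀ J, p < J → ClosedUnderCyclicQuotients P J) (hM : P M) {x : M}
    (hx : (R ∙ x).annihilator = p) : P (M ⧸ R ∙ x) := by
  obtain ⟨hA, hMA⟩ := hP.torsionBySet_and_quotient hM p
  have hxA : x ∈ torsionBySet R M p := (mem_torsionBySet_iff _ _).mpr fun ⟨r, hr⟩ ↦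
    (mem_annihilator_span_singleton x r).mp (hx ▸ hr)
  refine hP.of_quotient_sup (R ∙ x) (torsionBySet R M p) ?_ ?_
  · rw [LinearMap.submoduleOf_span_singleton_of_mem _ hxA]
    refine hP.quotient_span_singleton_of_isTorsionBySet hIH (torsionBySet_isTorsionBySet _) hA ?_
    ext r
    simp [← hx, Subtype.ext_iff]
  · rwa [sup_eq_right.mpr ((span_singleton_le_iff_mem _ _).mpr hxA)]

theorem closedUnderCyclicQuotients_of_forall_gt (hP : IsCoherentSubcategory R P) {I : Ideal R}
    (hIH : ∀ J, I < J → ClosedUnderCyclicQuotients P J) : ClosedUnderCyclicQuotients P I := by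
  intro M _ _ _ hM x hI
  obtain hlt | rfl := hI.lt_or_eq
  · exact hIH _ hlt M hM x le_rfl
  by_cases hp : (R ∙ x).annihilator.IsPrime
  · exact hP.quotient_span_singleton_of_isPrime hIH hM rfl
  · exact hP.quotient_span_singleton_of_not_isPrime hIH hp hM rfl

theorem closedUnderCyclicQuotients (hP : IsCoherentSubcategory R P) (I : Ideal R) :
    ClosedUnderCyclicQuotients P I :=
  IsNoetherian.induction (fun _ ↦ hP.closedUnderCyclicQuotients_of_forall_gt) I

theorem quotient (hP : IsCoherentSubcategory R P) (hM : P M) (N : Submodule R M) : P (M ⧸ N) := by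
  suffices ∀ K : Submodule R M, P (M ⧸ K) → P (M ⧸ (K ⊔ N)) by
    have h := this ⊥ (hP.of_equiv _ _ (quotEquivOfEqBot ⊥ rfl).symm hM)
    rwa [bot_sup_eq] at h
  induction N, IsNoetherian.noetherian N using fg_induction with
  | singleton x =>
    exact fun K hK ↦ hP.quotient_sup (hP.closedUnderCyclicQuotients ⊥) hK bot_le
  | sup N₁ N₂ _ _ h₁ h₂ =>
    exact fun K hK ↦ sup_assoc K N₁ N₂ ▸ h₂ _ (h₁ K hK)

theorem submodule (hP : IsCoherentSubcategory R P) (hM : P M) (N : Submodule R M) : P N :=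
  hP.of_equiv _ _ (LinearEquiv.ofEq _ _ N.ker_mkQ) (hP.ker _ _ N.mkQ hM (hP.quotient hM N))

end IsCoherentSubcategory

/-- Over a commutative noetherian ring, every coherent subcategory of the category of
finitely generated modules (an isomorphism-invariant predicate closed under kernels,
cokernels and extensions) is a Serre subcategory: it is closed under submodules, and
hence also under quotient modules. -/
theorem coherent_subcategory_is_serre
    (R : Type u) [CommRing R] [IsNoetherianRing R]
    (P : ∀ (M : Type u) [AddCommGroup M] [Module R M], Prop)
    (hiso : ∀ (M N : Type u) [AddCommGroup M] [Module R M] [AddCommGroup N] [Module R N]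
      [Module.Finite R M] [Module.Finite R N], (M ≃ₗ[R] N) → P M → P N)
    (hker : ∀ (M N : Type u) [AddCommGroup M] [Module R M] [AddCommGroup N] [Module R N]
      [Module.Finite R M] [Module.Finite R N] (f : M →ₗ[R] N),
      P M → P N → P (LinearMap.ker f))
    (hcoker : ∀ (M N : Type u) [AddCommGroup M] [Module R M] [AddCommGroup N] [Module R N]
      [Module.Finite R M] [Module.Finite R N] (f : M →ₗ[R] N),
      P M → P N → P (N ⧸ LinearMap.range f))
    (hext : ∀ (A B C : Type u) [AddCommGroup A] [Module R A] [AddCommGroup B] [Module R B]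
      [AddCommGroup C] [Module R C] [Module.Finite R A] [Module.Finite R B]
      [Module.Finite R C] (f : A →ₗ[R] B) (g : B →ₗ[R] C),
      Function.Injective f → Function.Surjective g → LinearMap.range f = LinearMap.ker g →
      P A → P C → P B) :
    (∀ (M : Type u) [AddCommGroup M] [Module R M] [Module.Finite R M]
      (N : Submodule R M), P M → P N) ∧
    (∀ (M : Type u) [AddCommGroup M] [Module R M] [Module.Finite R M]
      (N : Submodule R M), P M → P (M ⧸ N)) := by
  have hP : IsCoherentSubcategory R P := ⟨hiso, hker, hcoker, hext⟩
  exact ⟨fun M _ _ _ N hM ↦ hP.submodule hM N, fun M _ _ _ N hM ↦ hP.quotient hM N⟩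
end

section
/- Let R be a commutative noetherian ring. The assignments S ↦ {R-modules M with Supp M ⊆ S} and T ↦ ⋃_{M with T M} Supp M are mutually inverse bijections between the specialization-closed subsets of Spec R and the hereditary torsion classes of the category of all R-modules. Concretely: (a) for every specialization-closed subset S of Spec R, the union of Supp M over all R-modules M with Supp M ⊆ S equals S; and (b) for every hereditary torsion class T and every R-module M, T M holds if and only if Supp M ⊆ ⋃_{N with T N} Supp N. -/
/-!
A hereditary torsion class `T` contains `R ⧸ p` exactly when `p` lies in the support of one
of its members, since `R ⧸ Ann(x)` surjects onto `R ⧸ p` whenever `Ann(x) ⊆ p`. A noetherian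
module whose support lies in the union `U` of these supports is then in `T` by noetherian
induction on its quotients: a nonzero quotient `M ⧸ K` contains a copy of `R ⧸ p` for an
associated prime `p ∈ Supp M ⊆ U`, and is an extension of a strictly smaller quotient by it.
An arbitrary module is a quotient of the direct sum of its cyclic submodules.
-/

universe u

open PrimeSpectrum

theorem Module.support_quotient_ideal {R : Type*} [CommRing R] (I : Ideal R) :
    Module.support R (R ⧸ I) = zeroLocus I := by
  rw [Module.support_eq_zeroLocus, Ideal.annihilator_quotient]

theorem PrimeSpectrum.mem_support_quotient_asIdeal {R : Type*} [CommRing R]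
    (p : PrimeSpectrum R) : p ∈ Module.support R (R ⧸ p.asIdeal) := by
  rw [Module.support_quotient_ideal, mem_zeroLocus]

theorem iUnion_support_subset_eq_of_isUpperSet {R : Type u} [CommRing R]
    {S : Set (PrimeSpectrum R)} (hS : IsUpperSet S) :
    (⋃ (M : ModuleCat.{u} R) (_ : Module.support R M ⊆ S), Module.support R M) = S := by
  refine subset_antisymm (Set.iUnion₂_subset fun _ hM => hM) fun p hp => ?_
  refine Set.mem_iUnion₂.mpr
    ⟨ModuleCat.of R (R ⧸ p.asIdeal), ?_, p.mem_support_quotient_asIdeal⟩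
  show Module.support R (R ⧸ p.asIdeal) ⊆ S
  rw [Module.support_quotient_ideal]
  exact fun q hq => hS (show p ≤ q from hq) hp

theorem Submodule.lt_comap_mkQ_range {R M P : Type*} [Ring R] [AddCommGroup M] [Module R M]
    [AddCommGroup P] [Module R P] [Nontrivial P] {K : Submodule R M} {f : P →ₗ[R] M ⧸ K}
    (hf : Function.Injective f) : K < (LinearMap.range f).comap K.mkQ := by
  have hrange : ⊥ < LinearMap.range f := bot_lt_iff_ne_bot.mpr fun h => by
    obtain ⟨x, hx⟩ := exists_ne (0 : P)
    exact hx (hf (by simp [LinearMap.range_eq_bot.mp h]))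
  simpa [Submodule.comapMkQRelIso, ← Subtype.coe_lt_coe] using
    (Submodule.comapMkQRelIso K).lt_iff_lt.mpr hrange

structure IsHereditaryTorsionClass {R : Type u} [Ring R] (T : ModuleCat.{u} R → Prop) :
    Prop where
  iso_closed : ∀ M N : ModuleCat.{u} R, (M ≃ₗ[R] N) → T M → T N
  submodule_closed : ∀ (M : ModuleCat.{u} R) (N : Submodule R M), T M → T (ModuleCat.of R N)
  quotient_closed :
    ∀ (M : ModuleCat.{u} R) (N : Submodule R M), T M → T (ModuleCat.of R (M ⧸ N))
  extension_closed : ∀ (A B C : ModuleCat.{u} R) (f : A →ₗ[R] B) (g : B →ₗ[R] C),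
    Function.Injective f → Function.Surjective g →
    LinearMap.range f = LinearMap.ker g → T A → T C → T B
  directSum_closed : ∀ (ι : Type u) (A : ι → ModuleCat.{u} R), (∀ i, T (A i)) →
    T (ModuleCat.of R (DirectSum ι (fun i => A i)))

namespace IsHereditaryTorsionClass

variable {R : Type u} [CommRing R] {T : ModuleCat.{u} R → Prop} (hT : IsHereditaryTorsionClass T)
  {M N : Type u} [AddCommGroup M] [Module R M] [AddCommGroup N] [Module R N]
include hT

theorem of_linearEquiv (e : M ≃ₗ[R] N) (hM : T (ModuleCat.of R M)) : T (ModuleCat.of R N) :=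
  hT.iso_closed _ _ e hM

theorem of_surjective {f : M →ₗ[R] N} (hf : Function.Surjective f) (hM : T (ModuleCat.of R M)) :
    T (ModuleCat.of R N) :=
  hT.of_linearEquiv (f.quotKerEquivOfSurjective hf) (hT.quotient_closed _ _ hM)

theorem of_extension {C : Type u} [AddCommGroup C] [Module R C]
    {f : M →ₗ[R] N} {g : N →ₗ[R] C}
    (hf : Function.Injective f) (hg : Function.Surjective g)
    (hfg : LinearMap.range f = LinearMap.ker g) (hM : T (ModuleCat.of R M))
    (hC : T (ModuleCat.of R C)) : T (ModuleCat.of R N) :=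
  hT.extension_closed (.of R M) (.of R N) (.of R C) f g hf hg hfg hM hC

theorem of_subsingleton [Subsingleton M] : T (ModuleCat.of R M) := by
  have h := hT.directSum_closed PEmpty.{u + 1} (fun i => i.elim) (fun i => i.elim)
  exact hT.iso_closed _ _ (LinearEquiv.ofSubsingleton _ _) h

theorem quotient_mem_of_mem_support {X : ModuleCat.{u} R} (hX : T X) {p : PrimeSpectrum R}
    (hp : p ∈ Module.support R X) : T (ModuleCat.of R (R ⧸ p.asIdeal)) := by
  obtain ⟨x, hx⟩ := Module.mem_support_iff_exists_annihilator.mp hp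
  rw [Ideal.annihilator_span_singleton_eq_torsionOf] at hx
  have hspan : T (ModuleCat.of R (R ∙ x)) := hT.submodule_closed _ _ hX
  exact hT.of_surjective (Submodule.factor_surjective hx)
    (hT.of_linearEquiv (Ideal.quotTorsionOfEquivSpanSingleton R X x).symm hspan)

variable [IsNoetherianRing R]

theorem quotient_mem_of_isNoetherian [IsNoetherian R M]
    (hM : Module.support R M ⊆ ⋃ (N : ModuleCat.{u} R) (_ : T N), Module.support R N)
    (K : Submodule R M) : T (ModuleCat.of R (M ⧸ K)) := by
  induction K using WellFoundedGT.induction with | _ K ih =>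
  by_cases hK : K = ⊤
  · have : Subsingleton (M ⧸ K) := Submodule.Quotient.subsingleton_iff.mpr hK
    exact hT.of_subsingleton
  have : Nontrivial (M ⧸ K) := Submodule.Quotient.nontrivial_iff.mpr hK
  obtain ⟨p, hp⟩ := associatedPrimes.nonempty R (M ⧸ K)
  obtain ⟨hprime, f, hf⟩ := (isAssociatedPrime_iff_exists_injective_linearMap _ _).mp hp
  let P : PrimeSpectrum R := ⟨p, hprime⟩
  have hP : P ∈ Module.support R M :=
    Module.support_subset_of_surjective _ K.mkQ_surjective
      (Module.support_subset_of_injective f hf P.mem_support_quotient_asIdeal)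
  obtain ⟨N, hN, hPN⟩ := Set.mem_iUnion₂.mp (hM hP)
  have : Nontrivial (R ⧸ p) := Ideal.Quotient.nontrivial_iff.mpr hprime.ne_top
  have hlt := Submodule.lt_comap_mkQ_range hf
  set K' := (LinearMap.range f).comap K.mkQ
  have hTP : T (ModuleCat.of R (R ⧸ P.asIdeal)) := hT.quotient_mem_of_mem_support hN hPN
  have hTK' : T (ModuleCat.of R (M ⧸ K')) := ih K' hlt
  refine hT.of_extension hf (Submodule.factor_surjective hlt.le) ?_ hTP hTK'
  rw [Submodule.ker_mapQ, Submodule.comap_id, Submodule.map_comap_eq_of_surjective K.mkQ_surjective]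

theorem of_isNoetherian [IsNoetherian R M]
    (hM : Module.support R M ⊆ ⋃ (N : ModuleCat.{u} R) (_ : T N), Module.support R N) :
    T (ModuleCat.of R M) :=
  hT.of_linearEquiv (Submodule.quotEquivOfEqBot ⊥ rfl) (hT.quotient_mem_of_isNoetherian hM ⊥)

theorem of_support_subset
    (hM : Module.support R M ⊆ ⋃ (N : ModuleCat.{u} R) (_ : T N), Module.support R N) :
    T (ModuleCat.of R M) := by
  classical
  have hspan (x : M) : T (ModuleCat.of R (R ∙ x)) :=
    hT.of_isNoetherian ((Module.support_subset_of_injective _ (R ∙ x).injective_subtype).trans hM)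
  let φ : DirectSum M (fun x => ↥(R ∙ x)) →ₗ[R] M :=
    DirectSum.toModule R M M fun x => (R ∙ x).subtype
  have hφ : Function.Surjective φ := fun x =>
    ⟨DirectSum.lof R M (fun x => ↥(R ∙ x)) x ⟨x, Submodule.mem_span_singleton_self x⟩,
      by simp [φ]⟩
  exact hT.of_surjective hφ (hT.directSum_closed M (fun x => .of R (R ∙ x)) hspan)

theorem iff_support_subset (M : ModuleCat.{u} R) :
    T M ↔ Module.support R M ⊆ ⋃ (N : ModuleCat.{u} R) (_ : T N), Module.support R N :=
  ⟨fun hM => Set.subset_iUnion₂ (s := fun N (_ : T N) => Module.support R N) M hM,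
    hT.of_support_subset⟩

end IsHereditaryTorsionClass

/-- Classification of hereditary torsion classes of `Mod R` over a commutative noetherian
ring `R`: (a) for every specialization-closed `S ⊆ Spec R`, the union of the supports of
the modules supported in `S` is exactly `S`; (b) for every hereditary torsion class `T`
(an isomorphism-invariant predicate on `R`-modules closed under submodules, quotient
modules, extensions and arbitrary direct sums) and every `R`-module `M`, `T M` holds iff
`Supp M` is contained in the union of the supports of the modules in `T`. Thus
`S ↦ {M : Supp M ⊆ S}` and `T ↦ ⋃_{T M} Supp M` are mutually inverse bijections between
specialization-closed subsets of `Spec R` and hereditary torsion classes of `Mod R`. -/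
theorem torsion_classes_classification
    (R : Type u) [CommRing R] [IsNoetherianRing R] :
    (∀ S : Set (PrimeSpectrum R),
      (∀ p q : PrimeSpectrum R, p ∈ S → p.asIdeal ≤ q.asIdeal → q ∈ S) →
      (⋃ (M : ModuleCat.{u} R) (_ : Module.support R M ⊆ S),
        Module.support R M) = S) ∧
    (∀ T : ModuleCat.{u} R → Prop,
      (∀ M N : ModuleCat.{u} R, (M ≃ₗ[R] N) → T M → T N) →
      (∀ (M : ModuleCat.{u} R) (N : Submodule R M), T M → T (ModuleCat.of R N)) →
      (∀ (M : ModuleCat.{u} R) (N : Submodule R M), T M → T (ModuleCat.of R (M ⧸ N))) →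
      (∀ (A B C : ModuleCat.{u} R) (f : A →ₗ[R] B) (g : B →ₗ[R] C),
        Function.Injective f → Function.Surjective g →
        LinearMap.range f = LinearMap.ker g → T A → T C → T B) →
      (∀ (ι : Type u) (A : ι → ModuleCat.{u} R), (∀ i, T (A i)) →
        T (ModuleCat.of R (DirectSum ι (fun i => A i)))) →
      ∀ M : ModuleCat.{u} R,
        (T M ↔ Module.support R M ⊆
          ⋃ (N : ModuleCat.{u} R) (_ : T N), Module.support R N)) :=
  ⟨fun _ hS => iUnion_support_subset_eq_of_isUpperSet fun _ _ hpq hp => hS _ _ hp hpq,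
    fun _ hiso hsub hquot hext hsum =>
      IsHereditaryTorsionClass.iff_support_subset ⟨hiso, hsub, hquot, hext, hsum⟩⟩
end

section
/- Let R be a commutative noetherian ring. (a) If S is a specialization-closed subset of Spec R, then a finitely generated R-module M satisfies Ass M ⊆ S if and only if it satisfies Supp M ⊆ S. (b) If P is a Serre subcategory of the category of finitely generated R-modules, then ⋃_{M with P M} Ass M = ⋃_{M with P M} Supp M. -/
/-!
Every associated prime lies in the support, and conversely every prime in the support of a
finitely generated module `M` over a noetherian ring contains a minimal prime of `Ann M`,
which is associated. So `Ass M` and `Supp M` have the same specialization closure, which gives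
(a). For (b), if `p ∈ Supp M` with `M` in a Serre subcategory, pick `q ∈ Ass M` below `p`:
then `R ⧸ q` embeds into `M` and surjects onto `R ⧸ p`, so `R ⧸ p` lies in the subcategory,
and `p` is an associated prime of it.
-/

universe u

open Submodule

section AssociatedPrimes

variable {R : Type u} [CommRing R] {M : Type u} [AddCommGroup M] [Module R M]

lemma Module.mem_support_of_mem_associatedPrimes {p : PrimeSpectrum R}
    (h : p.asIdeal ∈ associatedPrimes R M) : p ∈ Module.support R M := by
  obtain ⟨-, x, hx⟩ := h
  refine Module.mem_support_iff_exists_annihilator.mpr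
    ⟨x, hx ▸ fun r hr ↦ Ideal.le_radical ?_⟩
  rwa [mem_colon_singleton, mem_bot, ← mem_annihilator_span_singleton]

lemma Module.mem_support_iff_exists_mem_associatedPrimes_le [IsNoetherianRing R]
    [Module.Finite R M] {p : PrimeSpectrum R} :
    p ∈ Module.support R M ↔ ∃ q ∈ associatedPrimes R M, q ≤ p.asIdeal := by
  constructor
  · intro hp
    obtain ⟨q, hq, hqp⟩ :=
      Ideal.exists_minimalPrimes_le (Module.mem_support_iff_of_finite.mp hp)
    exact ⟨q, Module.associatedPrimes.minimalPrimes_annihilator_subset_associatedPrimes R M hq,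
      hqp⟩
  · rintro ⟨q, hq, hqp⟩
    exact Module.mem_support_mono (p := ⟨q, hq.isPrime⟩) hqp
      (Module.mem_support_of_mem_associatedPrimes hq)

lemma setOf_mem_associatedPrimes_subset_iff_support_subset [IsNoetherianRing R]
    [Module.Finite R M] {S : Set (PrimeSpectrum R)}
    (hS : ∀ p q : PrimeSpectrum R, p ∈ S → p.asIdeal ≤ q.asIdeal → q ∈ S) :
    {p : PrimeSpectrum R | p.asIdeal ∈ associatedPrimes R M} ⊆ S ↔
      Module.support R M ⊆ S := by
  refine ⟨fun hAss p hp ↦ ?_,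
    fun hSupp p hp ↦ hSupp (Module.mem_support_of_mem_associatedPrimes hp)⟩
  obtain ⟨q, hq, hqp⟩ := Module.mem_support_iff_exists_mem_associatedPrimes_le.mp hp
  exact hS ⟨q, hq.isPrime⟩ p (hAss hq) hqp

lemma mem_associatedPrimes_quotient_self [IsNoetherianRing R] (p : Ideal R) [p.IsPrime] :
    p ∈ associatedPrimes R (R ⧸ p) := by
  rw [associatedPrimes.eq_singleton_of_isPrimary (Ideal.IsPrime.isPrimary ‹_›),
    Ideal.IsPrime.radical ‹_›]
  rfl

end AssociatedPrimes

section SerreClass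

variable {R : Type u} [CommRing R] {P : ModuleCat.{u} R → Prop}

lemma ModuleCat.prop_of_injective [IsNoetherianRing R]
    (hiso : ∀ M N : ModuleCat.{u} R, Module.Finite R M → Module.Finite R N →
      (M ≃ₗ[R] N) → P M → P N)
    (hsub : ∀ (M : ModuleCat.{u} R) (N : Submodule R M), Module.Finite R M →
      P M → P (ModuleCat.of R N))
    {M N : ModuleCat.{u} R} [Module.Finite R M] (f : N →ₗ[R] M) (hf : Function.Injective f)
    (hM : P M) : P N := by
  have : Module.Finite R N := Module.Finite.of_injective f hf
  exact hiso _ _ (Module.Finite.range f) ‹_› (LinearEquiv.ofInjective f hf).symm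
    (hsub M (LinearMap.range f) ‹_› hM)

lemma ModuleCat.prop_of_surjective
    (hiso : ∀ M N : ModuleCat.{u} R, Module.Finite R M → Module.Finite R N →
      (M ≃ₗ[R] N) → P M → P N)
    (hquot : ∀ (M : ModuleCat.{u} R) (N : Submodule R M), Module.Finite R M →
      P M → P (ModuleCat.of R (M ⧸ N)))
    {M N : ModuleCat.{u} R} [Module.Finite R M] (f : M →ₗ[R] N) (hf : Function.Surjective f)
    (hM : P M) : P N :=
  hiso _ _ inferInstance (Module.Finite.of_surjective f hf) (f.quotKerEquivOfSurjective hf)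
    (hquot M (LinearMap.ker f) ‹_› hM)

end SerreClass

/-- Over a commutative noetherian ring `R`: (a) for a specialization-closed subset `S` of
`Spec R` and a finitely generated module `M`, `Ass M ⊆ S` iff `Supp M ⊆ S`; and (b) for a
Serre subcategory `P` of `mod R` (an isomorphism-invariant predicate on finitely
generated modules closed under submodules, quotient modules and extensions), the union of
`Ass M` over `M` in `P` equals the union of `Supp M` over `M` in `P`. -/
theorem ass_and_supp_agree
    (R : Type u) [CommRing R] [IsNoetherianRing R] :
    (∀ S : Set (PrimeSpectrum R),
      (∀ p q : PrimeSpectrum R, p ∈ S → p.asIdeal ≤ q.asIdeal → q ∈ S) →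
      ∀ (M : Type u) [AddCommGroup M] [Module R M] [Module.Finite R M],
        ({p : PrimeSpectrum R | p.asIdeal ∈ associatedPrimes R M} ⊆ S ↔
          Module.support R M ⊆ S)) ∧
    (∀ P : ModuleCat.{u} R → Prop,
      (∀ M : ModuleCat.{u} R, P M → Module.Finite R M) →
      (∀ M N : ModuleCat.{u} R, Module.Finite R M → Module.Finite R N →
        (M ≃ₗ[R] N) → P M → P N) →
      (∀ (M : ModuleCat.{u} R) (N : Submodule R M), Module.Finite R M →
        P M → P (ModuleCat.of R N)) →
      (∀ (M : ModuleCat.{u} R) (N : Submodule R M), Module.Finite R M →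
        P M → P (ModuleCat.of R (M ⧸ N))) →
      (∀ (A B C : ModuleCat.{u} R) (f : A →ₗ[R] B) (g : B →ₗ[R] C),
        Module.Finite R A → Module.Finite R B → Module.Finite R C →
        Function.Injective f → Function.Surjective g →
        LinearMap.range f = LinearMap.ker g → P A → P C → P B) →
      (⋃ (M : ModuleCat.{u} R) (_ : P M),
          {p : PrimeSpectrum R | p.asIdeal ∈ associatedPrimes R (M : Type u)}) =
        ⋃ (M : ModuleCat.{u} R) (_ : P M), Module.support R M) := by
  refine ⟨fun S hS M _ _ _ ↦ setOf_mem_associatedPrimes_subset_iff_support_subset hS,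
    fun P hfin hiso hsub hquot _ ↦ ?_⟩
  refine subset_antisymm
    (Set.iUnion₂_mono fun M _ p ↦ Module.mem_support_of_mem_associatedPrimes) ?_
  simp only [Set.iUnion_subset_iff]
  intro M hM p hp
  have := hfin M hM
  obtain ⟨q, hq, hqp⟩ := Module.mem_support_iff_exists_mem_associatedPrimes_le.mp hp
  obtain ⟨-, f, hf⟩ := (isAssociatedPrime_iff_exists_injective_linearMap q M).mp hq
  have hRq : P (ModuleCat.of R (R ⧸ q)) := ModuleCat.prop_of_injective hiso hsub f hf hM
  have hRp : P (ModuleCat.of R (R ⧸ p.asIdeal)) :=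
    ModuleCat.prop_of_surjective hiso hquot (factor hqp) (factor_surjective hqp) hRq
  exact Set.mem_biUnion hRp (mem_associatedPrimes_quotient_self p.asIdeal)
end

section
/- Let R be a commutative noetherian ring, and let P be an isomorphism-invariant predicate on finitely generated R-modules that is closed under finite direct sums, kernels and cokernels. Then P is closed under submodules and under quotient modules. -/
/-!
Since `N = ker (M → M ⧸ N)`, it suffices to treat quotients, and by noetherian induction it
suffices, given `N₀ < N` with `P (M ⧸ N₀)`, to find `N₀ < N₁ ≤ N` with `P (M ⧸ N₁)`.
Replacing `M` by `M ⧸ N₀`, we need a nonzero submodule `L ≤ N` with `P (M ⧸ L)`. Pick an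
associated prime `p` of `N`, i.e. an embedding `R ⧸ p ↪ N`. The `p`-torsion `T` of `M` is the
kernel of `M → Mⁿ, m ↦ (gᵢ m)` for generators `gᵢ` of `p`, so `P T`. As an `R ⧸ p`-module, `T`
contains the image of `1` as a non-torsion element, so over the domain `R ⧸ p` some functional
`T → R ⧸ p` does not vanish on it. Composing with `R ⧸ p ↪ N ⊆ M` gives a map `T → M` with
nonzero image `L ≤ N`, and `M ⧸ L` is its cokernel.
-/

universe u

open Submodule

theorem exists_linearMap_apply_ne_zero_of_notMem_torsion {D A : Type*} [CommRing D] [IsDomain D]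
    [AddCommGroup A] [Module D A] [Module.Finite D A] {x : A} (hx : x ∉ torsion D A) :
    ∃ φ : A →ₗ[D] D, φ x ≠ 0 := by
  let K := FractionRing D
  let μ := LocalizedModule.mkLinearMap (nonZeroDivisors D) A
  have hμx : μ x ≠ 0 := fun h ↦ hx <| (mem_torsion_iff x).mpr <|
    (IsLocalizedModule.eq_zero_iff (nonZeroDivisors D) μ).mp h
  obtain ⟨ℓ, hℓ⟩ := Module.Projective.exists_dual_ne_zero K hμx
  let φ₀ : A →ₗ[D] K := ℓ.restrictScalars D ∘ₗ μ
  -- the image of `φ₀` is finitely generated, hence fractional: clear its denominators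
  obtain ⟨b, hb, hint⟩ := FractionalIdeal.isFractional_of_fg (S := nonZeroDivisors D)
    (LinearMap.range_eq_map φ₀ ▸ Module.Finite.fg_top.map φ₀)
  have hinj : Function.Injective (Algebra.linearMap D K) := IsFractionRing.injective D K
  let ψ := (b • φ₀).codLift _ hinj fun a ↦ hint _ (LinearMap.mem_range_self φ₀ a)
  refine ⟨ψ, fun h ↦ hℓ ?_⟩
  have : b • φ₀ x = 0 := by
    rw [← LinearMap.smul_apply, ← (b • φ₀).comp_codLift _ hinj, LinearMap.comp_apply]
    exact (congrArg _ h).trans (map_zero _)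
  exact (smul_eq_zero.mp this).resolve_left (nonZeroDivisors.ne_zero hb)

structure IsClosedUnderSumsKernelsCokernels (R : Type u) [CommRing R]
    (P : ∀ (M : Type u) [AddCommGroup M] [Module R M], Prop) : Prop where
  iso : ∀ (M N : Type u) [AddCommGroup M] [Module R M] [AddCommGroup N] [Module R N]
    [Module.Finite R M] [Module.Finite R N], (M ≃ₗ[R] N) → P M → P N
  prod : ∀ (M N : Type u) [AddCommGroup M] [Module R M] [AddCommGroup N] [Module R N]
    [Module.Finite R M] [Module.Finite R N], P M → P N → P (M × N)
  ker : ∀ (M N : Type u) [AddCommGroup M] [Module R M] [AddCommGroup N] [Module R N]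
    [Module.Finite R M] [Module.Finite R N] (f : M →ₗ[R] N), P M → P N → P (LinearMap.ker f)
  coker : ∀ (M N : Type u) [AddCommGroup M] [Module R M] [AddCommGroup N] [Module R N]
    [Module.Finite R M] [Module.Finite R N] (f : M →ₗ[R] N),
    P M → P N → P (N ⧸ LinearMap.range f)

namespace IsClosedUnderSumsKernelsCokernels

variable {R : Type u} [CommRing R] {P : ∀ (M : Type u) [AddCommGroup M] [Module R M], Prop}
  {M : Type u} [AddCommGroup M] [Module R M] [Module.Finite R M]

theorem pi_fin (hP : IsClosedUnderSumsKernelsCokernels R P) (hM : P M) : ∀ n : ℕ, P (Fin n → M)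
  | 0 => by
    have : Subsingleton (LinearMap.ker (LinearMap.id : M →ₗ[R] M)) := by
      rw [LinearMap.ker_id]; infer_instance
    exact hP.iso _ _ (LinearEquiv.ofSubsingleton _ _) (hP.ker M M LinearMap.id hM hM)
  | n + 1 => hP.iso _ _ (Fin.consLinearEquiv R fun _ ↦ M) (hP.prod _ _ hM (pi_fin hP hM n))

theorem torsionBySet [IsNoetherianRing R] (hP : IsClosedUnderSumsKernelsCokernels R P)
    (hM : P M) (I : Ideal R) : P (Submodule.torsionBySet R M I) := by
  obtain ⟨n, v, hv⟩ := fg_iff_exists_fin_generating_family.mp (IsNoetherian.noetherian I)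
  let g : M →ₗ[R] Fin n → M := LinearMap.pi fun i ↦ v i • LinearMap.id
  have hg : LinearMap.ker g = Submodule.torsionBySet R M I := by
    rw [← hv, ← torsionBySet_eq_torsionBySet_span]
    ext z
    simp [g, funext_iff, mem_torsionBySet_iff]
  exact hP.iso _ _ (LinearEquiv.ofEq _ _ hg) (hP.ker _ _ g hM (hP.pi_fin hM n))

theorem exists_ne_bot_le_quotient [IsNoetherianRing R]
    (hP : IsClosedUnderSumsKernelsCokernels R P) (hM : P M) {N : Submodule R M} (hN : N ≠ ⊥) :
    ∃ L : Submodule R M, L ≠ ⊥ ∧ L ≤ N ∧ P (M ⧸ L) := by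
  have : Nontrivial N := nontrivial_iff_ne_bot.mpr hN
  obtain ⟨p, hp⟩ := associatedPrimes.nonempty R N
  obtain ⟨_, ι, hι⟩ := (isAssociatedPrime_iff_exists_injective_linearMap p N).mp hp
  let j : R ⧸ p →ₗ[R] M := N.subtype ∘ₗ ι
  have hj : Function.Injective j := N.injective_subtype.comp hι
  let T := Submodule.torsionBySet R M p
  have hjT : ∀ y, j y ∈ T := by
    intro y
    refine (mem_torsionBySet_iff _ _).mpr fun a ↦ ?_
    obtain ⟨s, rfl⟩ := Ideal.Quotient.mk_surjective y
    have has : (a : R) • s ∈ p := p.mul_mem_right s a.2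
    rw [← map_smul, ← Ideal.Quotient.mk_eq_mk, ← Submodule.Quotient.mk_smul,
      (Submodule.Quotient.mk_eq_zero p).mpr has, map_zero]
  let x : T := ⟨j 1, hjT 1⟩
  have hx : x ∉ torsion (R ⧸ p) T := by
    rintro ⟨⟨a, ha⟩, hax⟩
    obtain ⟨r, rfl⟩ := Ideal.Quotient.mk_surjective a
    have : j (r • 1) = 0 := by
      simpa [x] using congrArg Subtype.val hax
    refine nonZeroDivisors.ne_zero ha ?_
    simpa [Algebra.smul_def] using hj (this.trans (map_zero j).symm)
  have : Module.Finite (R ⧸ p) T := .of_restrictScalars_finite R _ _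
  obtain ⟨φ, hφ⟩ := exists_linearMap_apply_ne_zero_of_notMem_torsion hx
  let f : T →ₗ[R] M := j ∘ₗ φ.restrictScalars R
  refine ⟨LinearMap.range f, ?_, ?_, hP.coker _ _ f (hP.torsionBySet hM p) hM⟩
  · exact fun h ↦ hφ <| hj <| by
      simpa [f] using LinearMap.congr_fun (LinearMap.range_eq_bot.mp h) x
  · rintro _ ⟨y, rfl⟩
    exact (ι _).2

theorem exists_gt_le_quotient [IsNoetherianRing R]
    (hP : IsClosedUnderSumsKernelsCokernels R P) {N₀ N : Submodule R M} (hN₀ : P (M ⧸ N₀))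
    (hlt : N₀ < N) : ∃ N₁, N₀ < N₁ ∧ N₁ ≤ N ∧ P (M ⧸ N₁) := by
  have hne : N.map N₀.mkQ ≠ ⊥ := by
    intro h
    have := comap_map_mkQ N₀ N
    rw [h, comap_bot, ker_mkQ] at this
    exact hlt.not_ge (le_sup_right.trans this.ge)
  obtain ⟨L, hL, hLN, hPL⟩ := hP.exists_ne_bot_le_quotient hN₀ hne
  have hL' := map_comap_eq_of_surjective N₀.mkQ_surjective L
  have hN₁ : N₀ < L.comap N₀.mkQ := by
    refine lt_of_le_of_ne (by simpa using comap_mono (f := N₀.mkQ) bot_le) fun h ↦ hL ?_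
    rw [← hL', ← h, mkQ_map_self]
  refine ⟨L.comap N₀.mkQ, hN₁, ?_, ?_⟩
  · exact (comap_mono hLN).trans (by rw [comap_map_mkQ, sup_eq_right.mpr hlt.le])
  · rw [← hL'] at hPL
    exact hP.iso _ _ (quotientQuotientEquivQuotient N₀ _ hN₁.le) hPL

theorem quotient [IsNoetherianRing R] (hP : IsClosedUnderSumsKernelsCokernels R P) (hM : P M)
    (N : Submodule R M) : P (M ⧸ N) := by
  suffices ∀ N₀ : Submodule R M, P (M ⧸ N₀) → N₀ ≤ N → P (M ⧸ N) from
    this ⊥ (hP.iso _ _ (quotEquivOfEqBot ⊥ rfl).symm hM) bot_le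
  intro N₀
  induction N₀ using WellFoundedGT.induction with
  | _ N₀ ih =>
    intro hN₀ hle
    obtain rfl | hlt := hle.eq_or_lt
    · exact hN₀
    obtain ⟨N₁, hN₀₁, hN₁, hPN₁⟩ := hP.exists_gt_le_quotient hN₀ hlt
    exact ih N₁ hN₀₁ hPN₁ hN₁

theorem submodule [IsNoetherianRing R] (hP : IsClosedUnderSumsKernelsCokernels R P) (hM : P M)
    (N : Submodule R M) : P N :=
  hP.iso _ _ (LinearEquiv.ofEq _ _ N.ker_mkQ) (hP.ker _ _ N.mkQ hM (hP.quotient hM N))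

end IsClosedUnderSumsKernelsCokernels

/-- Over a commutative noetherian ring, an isomorphism-invariant predicate on finitely
generated modules closed under finite direct sums, kernels and cokernels is closed under
submodules and quotient modules. -/
theorem closed_under_sums_kernels_cokernels_implies_sub_quot
    (R : Type u) [CommRing R] [IsNoetherianRing R]
    (P : ∀ (M : Type u) [AddCommGroup M] [Module R M], Prop)
    (hiso : ∀ (M N : Type u) [AddCommGroup M] [Module R M] [AddCommGroup N] [Module R N]
      [Module.Finite R M] [Module.Finite R N], (M ≃ₗ[R] N) → P M → P N)
    (hsum : ∀ (M N : Type u) [AddCommGroup M] [Module R M] [AddCommGroup N] [Module R N]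
      [Module.Finite R M] [Module.Finite R N], P M → P N → P (M × N))
    (hker : ∀ (M N : Type u) [AddCommGroup M] [Module R M] [AddCommGroup N] [Module R N]
      [Module.Finite R M] [Module.Finite R N] (f : M →ₗ[R] N),
      P M → P N → P (LinearMap.ker f))
    (hcoker : ∀ (M N : Type u) [AddCommGroup M] [Module R M] [AddCommGroup N] [Module R N]
      [Module.Finite R M] [Module.Finite R N] (f : M →ₗ[R] N),
      P M → P N → P (N ⧸ LinearMap.range f)) :
    (∀ (M : Type u) [AddCommGroup M] [Module R M] [Module.Finite R M]
      (N : Submodule R M), P M → P N) ∧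
    (∀ (M : Type u) [AddCommGroup M] [Module R M] [Module.Finite R M]
      (N : Submodule R M), P M → P (M ⧸ N)) := by
  have hP : IsClosedUnderSumsKernelsCokernels R P := ⟨hiso, hsum, hker, hcoker⟩
  exact ⟨fun M _ _ _ N hM ↦ hP.submodule hM N, fun M _ _ _ N hM ↦ hP.quotient hM N⟩
end

section
/- Let R be a commutative noetherian ring and let P be an isomorphism-invariant predicate on finitely generated R-modules that is closed under submodules and extensions. Let M be a nonzero finitely generated R-module whose set of associated primes is a single prime {p}. If P (R/p) holds, then P M holds. -/
/-!
If `Ass M ⊆ {p}`, then `p ≤ √(Ann M)` (the minimal primes of `Ann M` are associated) and every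
`s ∉ p` is regular on `M` (the zero divisors on `M` form the union of the associated primes);
conversely these two conditions force `Ass M ⊆ {p}`. For `M ≠ 0` pick an embedding `R/p ↪ M`
and let `N` be the saturation of its image with respect to `R ∖ p`. As `N` is finitely
generated, a single `t ∉ p` multiplies `N` into the image, so `N ↪ R/p`, while `M/N` again
satisfies the two conditions. Noetherian induction on the kernel of `M ↠ M/N` concludes.
-/

universe u

namespace Submodule

variable {R M : Type*} [CommRing R] [AddCommGroup M] [Module R M]

def saturation (S : Submonoid R) (N : Submodule R M) : Submodule R M where
  carrier := {y | ∃ s ∈ S, s • y ∈ N}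
  add_mem' := by
    rintro y z ⟨s, hs, hsy⟩ ⟨t, ht, htz⟩
    refine ⟨t * s, S.mul_mem ht hs, ?_⟩
    rw [smul_add, mul_smul, mul_comm, mul_smul]
    exact N.add_mem (N.smul_mem t hsy) (N.smul_mem s htz)
  zero_mem' := ⟨1, S.one_mem, by simp⟩
  smul_mem' := by
    rintro r y ⟨s, hs, hsy⟩
    exact ⟨s, hs, by rw [smul_comm]; exact N.smul_mem r hsy⟩

variable {S : Submonoid R} {N : Submodule R M} {y : M}

theorem le_saturation : N ≤ N.saturation S := fun y hy => ⟨1, S.one_mem, by simpa using hy⟩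

theorem mem_saturation_of_smul_mem {s : R} (hs : s ∈ S) (h : s • y ∈ N.saturation S) :
    y ∈ N.saturation S := by
  obtain ⟨t, ht, hty⟩ := h
  exact ⟨t * s, S.mul_mem ht hs, by rwa [mul_smul]⟩

theorem exists_smul_mem_of_le_saturation {T : Submodule R M} (hT : T.FG)
    (hle : T ≤ N.saturation S) : ∃ t ∈ S, ∀ y ∈ T, t • y ∈ N := by
  induction T, hT using fg_induction with
  | singleton x =>
    obtain ⟨s, hs, hsx⟩ := hle (mem_span_singleton_self x)
    refine ⟨s, hs, fun y hy => ?_⟩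
    obtain ⟨r, rfl⟩ := mem_span_singleton.mp hy
    rw [smul_comm]
    exact N.smul_mem r hsx
  | sup T₁ T₂ _ _ ih₁ ih₂ =>
    obtain ⟨t₁, ht₁, h₁⟩ := ih₁ (le_sup_left.trans hle)
    obtain ⟨t₂, ht₂, h₂⟩ := ih₂ (le_sup_right.trans hle)
    refine ⟨t₂ * t₁, S.mul_mem ht₂ ht₁, fun y hy => ?_⟩
    obtain ⟨y₁, hy₁, y₂, hy₂, rfl⟩ := mem_sup.mp hy
    rw [smul_add, mul_smul, mul_comm, mul_smul]
    exact N.add_mem (N.smul_mem t₂ (h₁ y₁ hy₁)) (N.smul_mem t₁ (h₂ y₂ hy₂))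

theorem isSMulRegular_quotient_saturation {s : R} (hs : s ∈ S) :
    IsSMulRegular (M ⧸ N.saturation S) s :=
  (isSMulRegular_quotient_iff_mem_of_smul_mem _ s).mpr fun _ => mem_saturation_of_smul_mem hs

theorem exists_injective_linearMap_saturation [IsNoetherian R M]
    (hreg : ∀ s ∈ S, IsSMulRegular M s) (N : Submodule R M) :
    ∃ f : N.saturation S →ₗ[R] N, Function.Injective f := by
  obtain ⟨t, ht, htN⟩ :=
    exists_smul_mem_of_le_saturation (IsNoetherian.noetherian (N.saturation S)) le_rfl
  refine ⟨(t • (N.saturation S).subtype).codRestrict N fun y => htN y y.2, fun y z hyz => ?_⟩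
  exact Subtype.ext (hreg t ht (congrArg Subtype.val hyz))

end Submodule

section AssociatedPrimes

variable {R M : Type*} [CommRing R] [IsNoetherianRing R] [AddCommGroup M] [Module R M]
  {p : Ideal R}

theorem forall_isSMulRegular_iff_associatedPrimes_le :
    (∀ s ∉ p, IsSMulRegular M s) ↔ ∀ q ∈ associatedPrimes R M, q ≤ p := by
  change _ ↔ ∀ q ∈ associatedPrimes R M, (q : Set R) ⊆ p
  rw [← Set.iUnion₂_subset_iff, biUnion_associatedPrimes_eq_compl_regular R M,
    Set.compl_subset_comm]
  rfl

variable [Module.Finite R M]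

theorem associatedPrimes_subset_singleton_iff :
    associatedPrimes R M ⊆ {p} ↔
      p ≤ (Module.annihilator R M).radical ∧ ∀ s ∉ p, IsSMulRegular M s := by
  rw [forall_isSMulRegular_iff_associatedPrimes_le]
  constructor
  · intro h
    refine ⟨?_, fun q hq => (h hq).le⟩
    rw [← Ideal.sInf_minimalPrimes]
    exact le_sInf fun q hq =>
      (h (Module.associatedPrimes.minimalPrimes_annihilator_subset_associatedPrimes R M hq)).ge
  · rintro ⟨hrad, hle⟩ q hq
    have hann : Module.annihilator R M ≤ q :=
      Submodule.annihilator_top (R := R) (M := M) ▸ hq.annihilator_le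
    exact le_antisymm (hle q hq) (hrad.trans (hq.isPrime.radical_le_iff.mpr hann))

theorem exists_submodule_injective_quotient_associatedPrimes_subset [Nontrivial M]
    (hM : associatedPrimes R M ⊆ {p}) :
    ∃ N : Submodule R M, N ≠ ⊥ ∧ (∃ f : N →ₗ[R] R ⧸ p, Function.Injective f) ∧
      associatedPrimes R (M ⧸ N) ⊆ {p} := by
  obtain ⟨q, hq⟩ := associatedPrimes.nonempty R M
  obtain ⟨_, f, hf⟩ :=
    (isAssociatedPrime_iff_exists_injective_linearMap p M).mp (hM hq ▸ hq)
  obtain ⟨hrad, hreg⟩ := associatedPrimes_subset_singleton_iff.mp hM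
  set N := (LinearMap.range f).saturation p.primeCompl
  obtain ⟨g, hg⟩ :=
    (LinearMap.range f).exists_injective_linearMap_saturation (S := p.primeCompl) hreg
  refine ⟨N, ?_, ⟨(LinearEquiv.ofInjective f hf).symm.toLinearMap ∘ₗ g, ?_⟩, ?_⟩
  · refine ne_bot_of_le_ne_bot ?_ Submodule.le_saturation
    rw [Ne, LinearMap.range_eq_bot]
    rintro rfl
    exact hf.ne one_ne_zero rfl
  · exact (LinearEquiv.ofInjective f hf).symm.injective.comp hg
  · refine associatedPrimes_subset_singleton_iff.mpr ⟨?_, fun s hs => ?_⟩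
    · exact hrad.trans (Ideal.radical_mono (N.mkQ.annihilator_le_of_surjective N.mkQ_surjective))
    · exact Submodule.isSMulRegular_quotient_saturation hs

end AssociatedPrimes

structure IsClosedUnderSubmodulesAndExtensions (R : Type u) [CommRing R]
    (P : ∀ (M : Type u) [AddCommGroup M] [Module R M], Prop) : Prop where
  of_equiv : ∀ (M N : Type u) [AddCommGroup M] [Module R M] [AddCommGroup N] [Module R N]
    [Module.Finite R M] [Module.Finite R N], (M ≃ₗ[R] N) → P M → P N
  of_submodule : ∀ (M : Type u) [AddCommGroup M] [Module R M] [Module.Finite R M]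
    (N : Submodule R M), P M → P N
  of_exact : ∀ (A B C : Type u) [AddCommGroup A] [Module R A] [AddCommGroup B] [Module R B]
    [AddCommGroup C] [Module R C] [Module.Finite R A] [Module.Finite R B]
    [Module.Finite R C] (f : A →ₗ[R] B) (g : B →ₗ[R] C),
    Function.Injective f → Function.Surjective g → LinearMap.range f = LinearMap.ker g →
    P A → P C → P B

namespace IsClosedUnderSubmodulesAndExtensions

variable {R : Type u} [CommRing R] {P : ∀ (M : Type u) [AddCommGroup M] [Module R M], Prop}

theorem of_subsingleton (hP : IsClosedUnderSubmodulesAndExtensions R P) {A : Type u}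
    [AddCommGroup A] [Module R A] [Module.Finite R A] (hA : P A)
    (M : Type u) [AddCommGroup M] [Module R M] [Subsingleton M] : P M :=
  hP.of_equiv _ M (.ofSubsingleton _ _) (hP.of_submodule A ⊥ hA)

theorem of_injective (hP : IsClosedUnderSubmodulesAndExtensions R P) {M N : Type u}
    [AddCommGroup M] [Module R M] [AddCommGroup N] [Module R N] [Module.Finite R M]
    [Module.Finite R N] (f : M →ₗ[R] N) (hf : Function.Injective f) (hN : P N) : P M :=
  hP.of_equiv _ M (LinearEquiv.ofInjective f hf).symm (hP.of_submodule N _ hN)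

theorem of_submodule_of_quotient [IsNoetherianRing R]
    (hP : IsClosedUnderSubmodulesAndExtensions R P) {M : Type u} [AddCommGroup M] [Module R M]
    [Module.Finite R M] (N : Submodule R M) (hN : P N) (hQ : P (M ⧸ N)) : P M :=
  hP.of_exact N M (M ⧸ N) N.subtype N.mkQ N.injective_subtype N.mkQ_surjective
    (by rw [Submodule.range_subtype, Submodule.ker_mkQ]) hN hQ

theorem of_associatedPrimes_subset [IsNoetherianRing R]
    (hP : IsClosedUnderSubmodulesAndExtensions R P) {p : Ideal R} (hp : P (R ⧸ p))
    (M : Type u) [AddCommGroup M] [Module R M] [Module.Finite R M]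
    (hM : associatedPrimes R M ⊆ {p}) : P M := by
  suffices ∀ (K : Submodule R M) (N : Type u) [AddCommGroup N] [Module R N] [Module.Finite R N],
      associatedPrimes R N ⊆ {p} → ∀ g : M →ₗ[R] N, Function.Surjective g →
        LinearMap.ker g = K → P N from
    this ⊥ M hM LinearMap.id Function.surjective_id LinearMap.ker_id
  intro K
  induction K using IsNoetherian.induction with | hgt K ih => ?_
  intro N _ _ _ hN g hg hK
  cases subsingleton_or_nontrivial N
  · exact hP.of_subsingleton hp N
  obtain ⟨L, hL, ⟨f, hf⟩, hQ⟩ :=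
    exists_submodule_injective_quotient_associatedPrimes_subset hN
  have hlt : K < LinearMap.ker (L.mkQ ∘ₗ g) := by
    rw [← hK, LinearMap.ker_comp, Submodule.ker_mkQ, ← Submodule.comap_bot]
    exact Submodule.comap_strictMono_of_surjective hg (bot_lt_iff_ne_bot.mpr hL)
  exact hP.of_submodule_of_quotient L (hP.of_injective f hf hp)
    (ih _ hlt (N ⧸ L) hQ _ (L.mkQ_surjective.comp hg) rfl)

end IsClosedUnderSubmodulesAndExtensions

theorem mem_of_ass_singleton_general
    (R : Type u) [CommRing R] [IsNoetherianRing R]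
    (P : ∀ (M : Type u) [AddCommGroup M] [Module R M], Prop)
    (hiso : ∀ (M N : Type u) [AddCommGroup M] [Module R M] [AddCommGroup N] [Module R N]
      [Module.Finite R M] [Module.Finite R N], (M ≃ₗ[R] N) → P M → P N)
    (hsub : ∀ (M : Type u) [AddCommGroup M] [Module R M] [Module.Finite R M]
      (N : Submodule R M), P M → P N)
    (hext : ∀ (A B C : Type u) [AddCommGroup A] [Module R A] [AddCommGroup B] [Module R B]
      [AddCommGroup C] [Module R C] [Module.Finite R A] [Module.Finite R B]
      [Module.Finite R C] (f : A →ₗ[R] B) (g : B →ₗ[R] C),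
      Function.Injective f → Function.Surjective g → LinearMap.range f = LinearMap.ker g →
      P A → P C → P B)
    (M : Type u) [AddCommGroup M] [Module R M] [Module.Finite R M]
    (p : Ideal R) (hp : associatedPrimes R M = {p})
    (hRp : P (R ⧸ p)) :
    P M :=
  IsClosedUnderSubmodulesAndExtensions.of_associatedPrimes_subset ⟨hiso, hsub, hext⟩ hRp M
    hp.subset

/-- Let `R` be commutative noetherian and `P` an isomorphism-invariant predicate on
finitely generated `R`-modules closed under submodules and extensions. If `M` is a nonzero
finitely generated module whose set of associated primes is exactly `{p}`, and `P (R/p)`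
holds, then `P M` holds. -/
theorem mem_of_ass_singleton
    (R : Type u) [CommRing R] [IsNoetherianRing R]
    (P : ∀ (M : Type u) [AddCommGroup M] [Module R M], Prop)
    (hiso : ∀ (M N : Type u) [AddCommGroup M] [Module R M] [AddCommGroup N] [Module R N]
      [Module.Finite R M] [Module.Finite R N], (M ≃ₗ[R] N) → P M → P N)
    (hsub : ∀ (M : Type u) [AddCommGroup M] [Module R M] [Module.Finite R M]
      (N : Submodule R M), P M → P N)
    (hext : ∀ (A B C : Type u) [AddCommGroup A] [Module R A] [AddCommGroup B] [Module R B]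
      [AddCommGroup C] [Module R C] [Module.Finite R A] [Module.Finite R B]
      [Module.Finite R C] (f : A →ₗ[R] B) (g : B →ₗ[R] C),
      Function.Injective f → Function.Surjective g → LinearMap.range f = LinearMap.ker g →
      P A → P C → P B)
    (M : Type u) [AddCommGroup M] [Module R M] [Module.Finite R M] [Nontrivial M]
    (p : Ideal R) (hp : associatedPrimes R M = {p})
    (hRp : P (R ⧸ p)) :
    P M :=
  mem_of_ass_singleton_general R P hiso hsub hext M p hp hRp
end

section
/- Let R be a commutative noetherian ring and let M, N be R-modules with Supp M ⊆ Supp N. Then M belongs to the hereditary torsion class of the category of all R-modules generated by N; that is, for every isomorphism-invariant predicate T on R-modules closed under submodules, quotient modules, extensions and arbitrary direct sums, if T N holds then T M holds. -/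
/-!
Over a noetherian ring every finitely generated module has a finite filtration whose factors
are of the form `R ⧸ p` with `p` in its support. Each such `R ⧸ p` is a quotient of a cyclic
submodule `R ∙ y ≅ R ⧸ Ann y` of `N` (choose `y` with `Ann y ⊆ p`, which exists since
`p ∈ Supp N`), so a class closed under subquotients and extensions containing `N` contains
every finitely generated `M` with `Supp M ⊆ Supp N`. An arbitrary `M` is a quotient of the
direct sum of its cyclic submodules.
-/

universe u

section

variable {R : Type u} [CommRing R]

theorem Module.mem_support_quotient (p : PrimeSpectrum R) :
    p ∈ Module.support R (R ⧸ p.asIdeal) := by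
  rw [Module.support_of_algebra, Ideal.Quotient.algebraMap_eq, Ideal.mk_ker]
  exact (PrimeSpectrum.mem_zeroLocus p _).mpr le_rfl

structure IsSubquotientClosed (T : ∀ (A : Type u) [AddCommGroup A] [Module R A], Prop) :
    Prop where
  of_equiv : ∀ (A B : Type u) [AddCommGroup A] [Module R A] [AddCommGroup B] [Module R B],
    (A ≃ₗ[R] B) → T A → T B
  of_submodule : ∀ (A : Type u) [AddCommGroup A] [Module R A] (B : Submodule R A), T A → T B
  of_quotient : ∀ (A : Type u) [AddCommGroup A] [Module R A] (B : Submodule R A),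
    T A → T (A ⧸ B)

structure IsSerreClass (T : ∀ (A : Type u) [AddCommGroup A] [Module R A], Prop) : Prop
    extends IsSubquotientClosed T where
  of_extension : ∀ (A B C : Type u) [AddCommGroup A] [Module R A] [AddCommGroup B] [Module R B]
    [AddCommGroup C] [Module R C] (f : A →ₗ[R] B) (g : B →ₗ[R] C),
    Function.Injective f → Function.Surjective g → LinearMap.range f = LinearMap.ker g →
    T A → T C → T B

variable {T : ∀ (A : Type u) [AddCommGroup A] [Module R A], Prop}
  {N : Type u} [AddCommGroup N] [Module R N]

namespace IsSubquotientClosed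

theorem of_subsingleton (hT : IsSubquotientClosed T) (hN : T N)
    (A : Type u) [AddCommGroup A] [Module R A] [Subsingleton A] : T A :=
  hT.of_equiv _ _ (LinearEquiv.ofSubsingleton _ _) (hT.of_submodule N ⊥ hN)

theorem quotient_of_mem_support (hT : IsSubquotientClosed T) (hN : T N)
    {p : PrimeSpectrum R} (hp : p ∈ Module.support R N) : T (R ⧸ p.asIdeal) := by
  obtain ⟨y, hy⟩ := Module.mem_support_iff_exists_annihilator.mp hp
  have hle : Ideal.torsionOf R N y ≤ p.asIdeal :=
    (Ideal.annihilator_span_singleton_eq_torsionOf y).symm.trans_le hy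
  have hcyclic : T (R ⧸ Ideal.torsionOf R N y) :=
    hT.of_equiv _ _ (Ideal.quotTorsionOfEquivSpanSingleton R N y).symm
      (hT.of_submodule N _ hN)
  exact hT.of_equiv _ _ (Submodule.quotientQuotientEquivQuotient _ _ hle)
    (hT.of_quotient _ _ hcyclic)

end IsSubquotientClosed

theorem IsSerreClass.of_finite_of_support_subset [IsNoetherianRing R] (hT : IsSerreClass T)
    (hN : T N) (M : Type u) [AddCommGroup M] [Module R M] [Module.Finite R M]
    (hsupp : Module.support R M ⊆ Module.support R N) : T M := by
  induction ‹Module.Finite R M› using IsNoetherianRing.induction_on_isQuotientEquivQuotientPrime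
    R with
  | subsingleton A => exact hT.of_subsingleton hN A
  | quotient A p e =>
    have hp : p ∈ Module.support R N :=
      hsupp (e.support_eq ▸ Module.mem_support_quotient p)
    exact hT.of_equiv _ _ e.symm (hT.quotient_of_mem_support hN hp)
  | exact A₁ A₂ A₃ f g hf hg hfg ih₁ ih₃ =>
    exact hT.of_extension _ _ _ f g hf hg hfg.linearMap_ker_eq.symm
      (ih₁ ((Module.support_subset_of_injective f hf).trans hsupp))
      (ih₃ ((Module.support_subset_of_surjective g hg).trans hsupp))

end

theorem DirectSum.toModule_subtype_span_singleton_surjective (R M : Type*) [CommRing R]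
    [AddCommGroup M] [Module R M] [DecidableEq M] :
    Function.Surjective (DirectSum.toModule R M M fun m => (R ∙ m).subtype) := fun m =>
  ⟨DirectSum.lof R M (fun m => R ∙ m) m ⟨m, Submodule.mem_span_singleton_self m⟩,
    DirectSum.toModule_lof R m _⟩

/-- Over a commutative noetherian ring, if `Supp M ⊆ Supp N` then `M` lies in the
hereditary torsion class of `Mod R` generated by `N`: every isomorphism-invariant
predicate on `R`-modules closed under submodules, quotient modules, extensions and
arbitrary direct sums which contains `N` also contains `M`. -/
theorem mem_torsionClass_generated_of_support_subset
    (R : Type u) [CommRing R] [IsNoetherianRing R]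
    (M N : Type u) [AddCommGroup M] [Module R M] [AddCommGroup N] [Module R N]
    (hsupp : Module.support R M ⊆ Module.support R N)
    (T : ∀ (A : Type u) [AddCommGroup A] [Module R A], Prop)
    (hiso : ∀ (A B : Type u) [AddCommGroup A] [Module R A] [AddCommGroup B] [Module R B],
      (A ≃ₗ[R] B) → T A → T B)
    (hsub : ∀ (A : Type u) [AddCommGroup A] [Module R A] (B : Submodule R A), T A → T B)
    (hquot : ∀ (A : Type u) [AddCommGroup A] [Module R A] (B : Submodule R A),
      T A → T (A ⧸ B))
    (hext : ∀ (A B C : Type u) [AddCommGroup A] [Module R A] [AddCommGroup B] [Module R B]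
      [AddCommGroup C] [Module R C] (f : A →ₗ[R] B) (g : B →ₗ[R] C),
      Function.Injective f → Function.Surjective g → LinearMap.range f = LinearMap.ker g →
      T A → T C → T B)
    (hsum : ∀ (ι : Type u) (A : ι → Type u) [∀ i, AddCommGroup (A i)] [∀ i, Module R (A i)],
      (∀ i, T (A i)) → T (DirectSum ι A))
    (hN : T N) :
    T M := by
  classical
  have hT : IsSerreClass T := ⟨⟨hiso, hsub, hquot⟩, hext⟩
  have hcyclic (m : M) : T (R ∙ m) :=
    hT.of_finite_of_support_subset hN _
      ((Module.support_subset_of_injective _ (Submodule.injective_subtype _)).trans hsupp)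
  exact hiso _ _
    (LinearMap.quotKerEquivOfSurjective _
      (DirectSum.toModule_subtype_span_singleton_surjective R M))
    (hquot _ _ (hsum M _ hcyclic))
end

section
/- Let R be a commutative noetherian ring and let M, N be finitely generated R-modules with Supp M ⊆ Supp N. Then M belongs to the Serre subcategory of the category of finitely generated R-modules generated by N; that is, for every isomorphism-invariant predicate P on finitely generated R-modules closed under submodules, quotient modules and extensions, if P N holds then P M holds. -/
/-!
Over a noetherian ring every finitely generated module `M` has a filtration whose factors are
of the form `R ⧸ p` with `p` prime, and every such `p` lies in `Supp M`. Since a Serre class is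
closed under extensions, it suffices to show that it contains `R ⧸ p` for every
`p ∈ Supp N = V(Ann N)`. Such a `p` contains a minimal prime `q` of `Ann N`; minimal primes of
the annihilator are associated primes, so `R ⧸ q` embeds into `N`, and `R ⧸ p` is a quotient
of `R ⧸ q`.
-/

open Module

structure IsSerreClass_s9 (R : Type u) [CommRing R]
    (P : ∀ (A : Type u) [AddCommGroup A] [Module R A], Prop) : Prop where
  of_linearEquiv : ∀ (A B : Type u) [AddCommGroup A] [Module R A] [AddCommGroup B] [Module R B]
    [Module.Finite R A] [Module.Finite R B], (A ≃ₗ[R] B) → P A → P B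
  submodule : ∀ (A : Type u) [AddCommGroup A] [Module R A] [Module.Finite R A]
    (B : Submodule R A), P A → P B
  quotient : ∀ (A : Type u) [AddCommGroup A] [Module R A] [Module.Finite R A]
    (B : Submodule R A), P A → P (A ⧸ B)
  of_extension : ∀ (A B C : Type u) [AddCommGroup A] [Module R A] [AddCommGroup B] [Module R B]
    [AddCommGroup C] [Module R C] [Module.Finite R A] [Module.Finite R B]
    [Module.Finite R C] (f : A →ₗ[R] B) (g : B →ₗ[R] C),
    Function.Injective f → Function.Surjective g → LinearMap.range f = LinearMap.ker g →
    P A → P C → P B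

namespace IsSerreClass_s9

variable {R : Type u} [CommRing R] {P : ∀ (A : Type u) [AddCommGroup A] [Module R A], Prop}
  (hP : IsSerreClass_s9 R P)
  {A B : Type u} [AddCommGroup A] [Module R A] [Module.Finite R A]
  [AddCommGroup B] [Module R B] [Module.Finite R B]
include hP

theorem of_injective (f : A →ₗ[R] B) (hf : Function.Injective f) (hB : P B) : P A :=
  hP.of_linearEquiv _ _ (LinearEquiv.ofInjective f hf).symm
    (hP.submodule B (LinearMap.range f) hB)

theorem of_surjective (f : A →ₗ[R] B) (hf : Function.Surjective f) (hA : P A) : P B :=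
  hP.of_linearEquiv _ _ (f.quotKerEquivOfSurjective hf) (hP.quotient A (LinearMap.ker f) hA)

theorem of_subsingleton [Subsingleton B] (hA : P A) : P B :=
  hP.of_surjective (0 : A →ₗ[R] B) (fun _ ↦ ⟨0, Subsingleton.elim _ _⟩) hA

theorem quotient_of_annihilator_le [IsNoetherianRing R] (hA : P A)
    (p : Ideal R) [p.IsPrime] (hp : annihilator R A ≤ p) : P (R ⧸ p) := by
  obtain ⟨q, hq, hqp⟩ := Ideal.exists_minimalPrimes_le hp
  obtain ⟨-, f, hf⟩ := (isAssociatedPrime_iff_exists_injective_linearMap q A).mp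
    (associatedPrimes.minimalPrimes_annihilator_subset_associatedPrimes R A hq)
  exact hP.of_surjective (Submodule.factor hqp) (Submodule.factor_surjective hqp)
    (hP.of_injective f hf hA)

theorem of_support_subset [IsNoetherianRing R] (hA : P A)
    (hsupp : support R B ⊆ support R A) : P B := by
  revert hsupp
  induction ‹Module.Finite R B› using IsNoetherianRing.induction_on_isQuotientEquivQuotientPrime R
    with
  | subsingleton C => exact fun _ ↦ hP.of_subsingleton hA
  | quotient C p e =>
    intro hsupp
    have hpC : p ∈ support R C := by
      rw [e.support_eq]
      simp [support_of_algebra]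
    exact hP.of_linearEquiv _ _ e.symm
      (hP.quotient_of_annihilator_le hA p.asIdeal (annihilator_le_of_mem_support (hsupp hpC)))
  | exact C₁ C₂ C₃ f g hf hg hfg ih₁ ih₃ =>
    intro hsupp
    rw [support_of_exact hfg hf hg, Set.union_subset_iff] at hsupp
    exact hP.of_extension _ _ _ f g hf hg (LinearMap.exact_iff.mp hfg).symm
      (ih₁ hsupp.1) (ih₃ hsupp.2)

end IsSerreClass_s9

/-- Over a commutative noetherian ring, if `M`, `N` are finitely generated with
`Supp M ⊆ Supp N`, then `M` lies in the Serre subcategory of `mod R` generated by `N`: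
every isomorphism-invariant predicate on finitely generated `R`-modules closed under
submodules, quotient modules and extensions which contains `N` also contains `M`. -/
theorem mem_serre_generated_of_support_subset
    (R : Type u) [CommRing R] [IsNoetherianRing R]
    (M N : Type u) [AddCommGroup M] [Module R M] [AddCommGroup N] [Module R N]
    [Module.Finite R M] [Module.Finite R N]
    (hsupp : Module.support R M ⊆ Module.support R N)
    (P : ∀ (A : Type u) [AddCommGroup A] [Module R A], Prop)
    (hiso : ∀ (A B : Type u) [AddCommGroup A] [Module R A] [AddCommGroup B] [Module R B]
      [Module.Finite R A] [Module.Finite R B], (A ≃ₗ[R] B) → P A → P B)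
    (hsub : ∀ (A : Type u) [AddCommGroup A] [Module R A] [Module.Finite R A]
      (B : Submodule R A), P A → P B)
    (hquot : ∀ (A : Type u) [AddCommGroup A] [Module R A] [Module.Finite R A]
      (B : Submodule R A), P A → P (A ⧸ B))
    (hext : ∀ (A B C : Type u) [AddCommGroup A] [Module R A] [AddCommGroup B] [Module R B]
      [AddCommGroup C] [Module R C] [Module.Finite R A] [Module.Finite R B]
      [Module.Finite R C] (f : A →ₗ[R] B) (g : B →ₗ[R] C),
      Function.Injective f → Function.Surjective g → LinearMap.range f = LinearMap.ker g →
      P A → P C → P B)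
    (hN : P N) :
    P M :=
  (IsSerreClass_s9.mk hiso hsub hquot hext).of_support_subset hN hsupp
end

section
/- Let R be a commutative noetherian ring and let M, N be finitely generated R-modules with Ass M ⊆ Ass N. Then M belongs to the smallest subcategory of the category of finitely generated R-modules closed under submodules and extensions containing N; that is, for every isomorphism-invariant predicate P on finitely generated R-modules closed under submodules and extensions, if P N holds then P M holds. -/
/-!
Every `R ⧸ p` with `p ∈ Ass N` is isomorphic to a cyclic submodule of `N`, so `P` holds for it,
and hence for every finitely generated torsion-free `R ⧸ p`-module, which embeds into a free one.
For `A ≠ 0` with `Ass A ⊆ Ass N`, choose `p` maximal in `Ass A`. Then `Γ = (0 :_A p)` is nonzero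
and, by maximality of `p`, torsion-free over `R ⧸ p`; and `A ⧸ Γ` embeds into `Aⁿ` via
`x ↦ (s₁ x, …, sₙ x)` for generators `sᵢ` of `p`, so `Ass (A ⧸ Γ) ⊆ Ass A`. Noetherian induction
over the quotients of `A` then gives `P A`.
-/

open Submodule

section AssociatedPrimes

variable {R : Type*} [CommRing R] [IsNoetherianRing R] {M : Type*} [AddCommGroup M] [Module R M]

theorem associatedPrimes.pi_subset {ι : Type*} [Finite ι] :
    associatedPrimes R (ι → M) ⊆ associatedPrimes R M := by
  cases nonempty_fintype ι
  intro q hq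
  obtain ⟨hprime, v, rfl⟩ := isAssociatedPrime_iff.mp hq
  have hcolon : colon (⊥ : Submodule R (ι → M)) {v} =
      Finset.univ.inf fun i => colon (⊥ : Submodule R M) {v i} := by
    ext a
    simp [mem_colon_singleton, funext_iff]
  obtain ⟨i, -, hi⟩ := hprime.inf_le'.mp hcolon.ge
  exact isAssociatedPrime_iff.mpr
    ⟨hprime, v i, le_antisymm (hcolon.trans_le (Finset.inf_le (Finset.mem_univ i))) hi⟩

theorem associatedPrimes.quotient_torsionBySet_subset (I : Ideal R) :
    associatedPrimes R (M ⧸ torsionBySet R M I) ⊆ associatedPrimes R M := by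
  obtain ⟨n, s, hs⟩ := fg_iff_exists_fin_generating_family.mp (IsNoetherian.noetherian I)
  let f : M →ₗ[R] Fin n → M := LinearMap.pi fun i => s i • LinearMap.id
  have hker : LinearMap.ker f = torsionBySet R M I := by
    ext x
    rw [← show Ideal.span (Set.range s) = I from hs, ← torsionBySet_eq_torsionBySet_span,
      mem_torsionBySet_iff]
    simp [f, funext_iff]
  rw [← hker, LinearEquiv.AssociatedPrimes.eq f.quotKerEquivRange]
  exact (associatedPrimes.subset_of_injective (LinearMap.range f).injective_subtype).trans
    associatedPrimes.pi_subset

theorem Submodule.torsionBySet_ne_bot_of_mem_associatedPrimes {p : Ideal R}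
    (hp : p ∈ associatedPrimes R M) : torsionBySet R M p ≠ ⊥ := by
  obtain ⟨hprime, x, rfl⟩ := isAssociatedPrime_iff.mp hp
  refine (Submodule.ne_bot_iff _).mpr ⟨x, (mem_torsionBySet_iff _ _).mpr fun a => ?_,
    fun hx => hprime.ne_top ?_⟩
  · exact (mem_bot R).mp (mem_colon_singleton.mp a.2)
  · ext; simp [hx, mem_colon_singleton]

theorem Submodule.isTorsionFree_torsionBySet_of_maximal {p : Ideal R}
    (hp : Maximal (· ∈ associatedPrimes R M) p) :
    Module.IsTorsionFree (R ⧸ p) (torsionBySet R M p) := by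
  have := hp.prop.isPrime
  rw [Module.isTorsionFree_iff_smul_eq_zero]
  rintro r ⟨x, hx⟩ hrx
  obtain ⟨r, rfl⟩ := Ideal.Quotient.mk_surjective r
  by_cases hx0 : x = 0
  · exact Or.inr (by simpa using hx0)
  obtain ⟨q, hq, hxq⟩ := exists_le_isAssociatedPrime_of_isNoetherianRing R x hx0
  have hpx : p ≤ colon ⊥ {x} := fun a ha =>
    mem_colon_singleton.mpr ((mem_bot R).mpr ((mem_torsionBySet_iff _ _).mp hx ⟨a, ha⟩))
  refine Or.inl (Ideal.Quotient.eq_zero_iff_mem.mpr (hp.2 hq (hpx.trans hxq) (hxq ?_)))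
  rw [mem_colon_singleton, mem_bot]
  simpa using congrArg Subtype.val hrx

end AssociatedPrimes

theorem Module.exists_injective_pi_of_isTorsionFree (D M : Type*) [CommRing D] [IsDomain D]
    [AddCommGroup M] [Module D M] [Module.Finite D M] [Module.IsTorsionFree D M] :
    ∃ (n : ℕ) (f : M →ₗ[D] Fin n → D), Function.Injective f := by
  obtain ⟨k, g, hg⟩ := Module.Finite.exists_fin (R := D) (M := M)
  obtain ⟨I, hI, hmax⟩ := exists_maximal_linearIndepOn D g
  set F := span D (Set.range fun i : I => g i)
  have hgF : ∀ i, ∃ a : D, a ≠ 0 ∧ a • g i ∈ F := fun i => by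
    by_cases hi : i ∈ I
    · exact ⟨1, one_ne_zero, by simpa using subset_span (Set.mem_range_self (⟨i, hi⟩ : I))⟩
    · simpa only [F, ← Set.image_eq_range] using hmax i hi
  have htors : Module.IsTorsion D (M ⧸ F) := by
    suffices torsion D (M ⧸ F) = ⊤ from fun x => (mem_torsion_iff x).mp (this ▸ mem_top)
    have hspan : span D (Set.range (F.mkQ ∘ g)) = ⊤ := by
      rw [Set.range_comp, ← map_span, hg, Submodule.map_top, range_mkQ]
    rw [eq_top_iff, ← hspan, span_le]
    rintro _ ⟨i, rfl⟩
    obtain ⟨a, ha, haF⟩ := hgF i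
    refine (mem_torsion_iff _).mpr ⟨⟨a, mem_nonZeroDivisors_of_ne_zero ha⟩, ?_⟩
    simpa [← Quotient.mk_smul] using haF
  obtain ⟨a, ha, ha0⟩ := annihilator_top_inter_nonZeroDivisors htors
  have haF : ∀ x : M, a • x ∈ F := fun x => by
    rw [← Quotient.mk_eq_zero, Quotient.mk_smul]
    exact Submodule.mem_annihilator.mp ha _ mem_top
  have : Module.Free D F := Module.Free.of_basis (Module.Basis.span hI)
  have : Module.Finite D F := Module.Finite.span_of_finite D (Set.finite_range _)
  refine ⟨_, (Module.finBasis D F).equivFun.toLinearMap ∘ₗ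
    (a • LinearMap.id).codRestrict F haF, ?_⟩
  intro x y hxy
  have := congrArg Subtype.val ((Module.finBasis D F).equivFun.injective hxy)
  simpa [nonZeroDivisors.ne_zero ha0] using this

structure IsSubExtClosed (R : Type u) [CommRing R]
    (P : ∀ (A : Type u) [AddCommGroup A] [Module R A], Prop) : Prop where
  iso : ∀ (A B : Type u) [AddCommGroup A] [Module R A] [AddCommGroup B] [Module R B]
      [Module.Finite R A] [Module.Finite R B], (A ≃ₗ[R] B) → P A → P B
  sub : ∀ (A : Type u) [AddCommGroup A] [Module R A] [Module.Finite R A]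
      (B : Submodule R A), P A → P B
  ext : ∀ (A B C : Type u) [AddCommGroup A] [Module R A] [AddCommGroup B] [Module R B]
      [AddCommGroup C] [Module R C] [Module.Finite R A] [Module.Finite R B]
      [Module.Finite R C] (f : A →ₗ[R] B) (g : B →ₗ[R] C),
      Function.Injective f → Function.Surjective g → LinearMap.range f = LinearMap.ker g →
      P A → P C → P B

namespace IsSubExtClosed

variable {R : Type u} [CommRing R] {P : ∀ (A : Type u) [AddCommGroup A] [Module R A], Prop}
  {A B : Type u} [AddCommGroup A] [Module R A] [Module.Finite R A]
  [AddCommGroup B] [Module R B] [Module.Finite R B]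

theorem of_injective (hP : IsSubExtClosed R P) (f : A →ₗ[R] B) (hf : Function.Injective f)
    (hB : P B) : P A :=
  hP.iso _ _ (LinearEquiv.ofInjective f hf).symm (hP.sub B _ hB)

theorem of_subsingleton (hP : IsSubExtClosed R P) [Subsingleton A] (hB : P B) : P A :=
  hP.of_injective (0 : A →ₗ[R] B) (Function.injective_of_subsingleton _) hB

theorem prod (hP : IsSubExtClosed R P) (hA : P A) (hB : P B) : P (A × B) :=
  hP.ext A (A × B) B (LinearMap.inl R A B) (LinearMap.snd R A B) LinearMap.inl_injective
    LinearMap.snd_surjective Function.Exact.inl_snd.linearMap_ker_eq.symm hA hB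

theorem pi (hP : IsSubExtClosed R P) (hA : P A) : ∀ n : ℕ, P (Fin n → A)
  | 0 => hP.of_subsingleton hA
  | n + 1 => hP.iso _ _ (Fin.consLinearEquiv R fun _ : Fin (n + 1) => A) (hP.prod hA (hP.pi hA n))

variable [IsNoetherianRing R]

theorem of_submodule_of_quotient (hP : IsSubExtClosed R P) (S : Submodule R A) (hS : P S)
    (hA : P (A ⧸ S)) : P A :=
  hP.ext S A (A ⧸ S) S.subtype S.mkQ S.injective_subtype S.mkQ_surjective
    (by rw [S.range_subtype, S.ker_mkQ]) hS hA

theorem quotient_of_mem_associatedPrimes (hP : IsSubExtClosed R P) (hB : P B) {p : Ideal R}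
    (hp : p ∈ associatedPrimes R B) : P (R ⧸ p) :=
  have ⟨_, f, hf⟩ := (isAssociatedPrime_iff_exists_injective_linearMap p B).mp hp
  hP.of_injective f hf hB

theorem of_isTorsionFree (hP : IsSubExtClosed R P) (hB : P B) {p : Ideal R}
    (hp : p ∈ associatedPrimes R B) [Module (R ⧸ p) A] [IsScalarTower R (R ⧸ p) A]
    [Module.IsTorsionFree (R ⧸ p) A] : P A := by
  have := hp.isPrime
  have : Module.Finite (R ⧸ p) A := Module.Finite.of_restrictScalars_finite R _ _
  obtain ⟨n, f, hf⟩ := Module.exists_injective_pi_of_isTorsionFree (R ⧸ p) A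
  exact hP.of_injective (f.restrictScalars R) hf
    (hP.pi (hP.quotient_of_mem_associatedPrimes hB hp) n)

theorem of_torsionBySet (hP : IsSubExtClosed R P) (hB : P B) {p : Ideal R}
    (hp : Maximal (· ∈ associatedPrimes R A) p)
    (hAB : associatedPrimes R A ⊆ associatedPrimes R B) : P (torsionBySet R A p) :=
  have := isTorsionFree_torsionBySet_of_maximal hp
  hP.of_isTorsionFree hB (hAB hp.prop)

theorem of_associatedPrimes_subset (hP : IsSubExtClosed R P) (hB : P B)
    (hAB : associatedPrimes R A ⊆ associatedPrimes R B) : P A := by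
  suffices ∀ Q : Submodule R A, associatedPrimes R (A ⧸ Q) ⊆ associatedPrimes R B → P (A ⧸ Q) by
    have e := quotEquivOfEqBot (⊥ : Submodule R A) rfl
    exact hP.iso _ _ e (this ⊥ ((LinearEquiv.AssociatedPrimes.eq e).trans_subset hAB))
  intro Q
  induction Q using IsNoetherian.induction with | hgt Q ih => ?_
  intro hQ
  rcases subsingleton_or_nontrivial (A ⧸ Q) with _ | _
  · exact hP.of_subsingleton hB
  obtain ⟨p, hp⟩ :=
    (associatedPrimes.finite R (A ⧸ Q)).exists_maximal (associatedPrimes.nonempty R _)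
  set Γ := torsionBySet R (A ⧸ Q) p
  have hlt : Q < Γ.comap Q.mkQ := by
    simpa only [comap_bot, ker_mkQ] using (comap_lt_comap_iff_of_surjective Q.mkQ_surjective).mpr
      (bot_lt_iff_ne_bot.mpr (torsionBySet_ne_bot_of_mem_associatedPrimes hp.prop))
  have e : ((A ⧸ Q) ⧸ Γ) ≃ₗ[R] A ⧸ Γ.comap Q.mkQ :=
    (quotEquivOfEq _ _ (map_comap_eq_of_surjective Q.mkQ_surjective Γ).symm).trans
      (quotientQuotientEquivQuotient Q _ hlt.le)
  refine hP.of_submodule_of_quotient Γ (hP.of_torsionBySet hB hp hQ)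
    (hP.iso _ _ e.symm (ih _ hlt ?_))
  rw [← LinearEquiv.AssociatedPrimes.eq e]
  exact (associatedPrimes.quotient_torsionBySet_subset p).trans hQ

end IsSubExtClosed

/-- Over a commutative noetherian ring, if `M`, `N` are finitely generated with
`Ass M ⊆ Ass N`, then `M` lies in the smallest subcategory of `mod R` closed under
submodules and extensions containing `N`: every isomorphism-invariant predicate on
finitely generated `R`-modules closed under submodules and extensions which contains `N`
also contains `M`. -/
theorem mem_subext_generated_of_associatedPrimes_subset
    (R : Type u) [CommRing R] [IsNoetherianRing R]
    (M N : Type u) [AddCommGroup M] [Module R M] [AddCommGroup N] [Module R N]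
    [Module.Finite R M] [Module.Finite R N]
    (hass : associatedPrimes R M ⊆ associatedPrimes R N)
    (P : ∀ (A : Type u) [AddCommGroup A] [Module R A], Prop)
    (hiso : ∀ (A B : Type u) [AddCommGroup A] [Module R A] [AddCommGroup B] [Module R B]
      [Module.Finite R A] [Module.Finite R B], (A ≃ₗ[R] B) → P A → P B)
    (hsub : ∀ (A : Type u) [AddCommGroup A] [Module R A] [Module.Finite R A]
      (B : Submodule R A), P A → P B)
    (hext : ∀ (A B C : Type u) [AddCommGroup A] [Module R A] [AddCommGroup B] [Module R B]
      [AddCommGroup C] [Module R C] [Module.Finite R A] [Module.Finite R B]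
      [Module.Finite R C] (f : A →ₗ[R] B) (g : B →ₗ[R] C),
      Function.Injective f → Function.Surjective g → LinearMap.range f = LinearMap.ker g →
      P A → P C → P B)
    (hN : P N) :
    P M :=
  IsSubExtClosed.of_associatedPrimes_subset ⟨hiso, hsub, hext⟩ hN hass
end

section
/- Let R be a commutative noetherian ring and let P be an isomorphism-invariant predicate on finitely generated R-modules that is closed under finite direct sums and cokernels. Let M be a cyclic R-module with P M. Then there exists a bounded chain complex X• of finitely generated free R-modules such that the zeroth homology H_0(X•) is isomorphic to M and P (H_j(X•)) holds for every integer j. -/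
/-!
Write `M ≅ R ⧸ I` and pick generators `a₁, …, aₙ` of `I`. The Koszul complex of `a`, i.e. the
exterior algebra of `Rⁿ` with differential the contraction by the linear form `d = ∑ aᵢ xᵢ`, is a
bounded complex of finite free modules with `H₀ = R ⧸ I`. Contraction is a derivation, so left
multiplication by `eᵢ` is a null-homotopy of multiplication by `aᵢ`; hence every homology module
is finitely generated and killed by `I`. Over a noetherian ring such a module is the cokernel of a
map `(R ⧸ I)ᵏ → (R ⧸ I)ᵐ`, and `P` holds for these sums of copies of `R ⧸ I ≅ M` (the zero module
being the cokernel of an identity).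
-/

universe u

open CategoryTheory CliffordAlgebra ExteriorAlgebra

theorem HomologicalComplex.homologyMap_smul {R C ι : Type*} [Semiring R] [Category* C]
    [Preadditive C] [Linear R C] {c : ComplexShape ι} {K L : HomologicalComplex C c}
    (r : R) (φ : K ⟶ L) (i : ι) [K.HasHomology i] [L.HasHomology i] :
    homologyMap (r • φ) i = r • homologyMap φ i :=
  ShortComplex.homologyMap_smul ((shortComplexFunctor C c i).map φ) r

theorem HomologicalComplex.moduleFinite_homology {R ι : Type*} [CommRing R] [IsNoetherianRing R]
    {c : ComplexShape ι} (K : HomologicalComplex (ModuleCat.{u} R) c) (i : ι)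
    [Module.Finite R (K.X i)] : Module.Finite R (K.homology i) :=
  have : Module.Finite R (K.cycles i) :=
    .of_injective (K.iCycles i).hom ((ModuleCat.mono_iff_injective _).mp inferInstance)
  .of_surjective (K.homologyπ i).hom ((ModuleCat.epi_iff_surjective _).mp inferInstance)

theorem exteriorPower.subsingleton_of_card_lt {R M ι : Type*} [CommRing R] [AddCommGroup M]
    [Module R M] [LinearOrder ι] [Fintype ι] (b : Module.Basis ι R M) {k : ℕ}
    (hk : Fintype.card ι < k) : Subsingleton (⋀[R]^k M) := by
  have : IsEmpty (Set.powersetCard ι k) :=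
    ⟨fun s => (Set.powersetCard.card_eq s ▸ Finset.card_le_univ (s : Finset ι)).not_gt hk⟩
  exact (b.exteriorPower k).repr.toEquiv.subsingleton

namespace ExteriorAlgebra

variable {R M : Type*} [CommRing R] [AddCommGroup M] [Module R M]

theorem ι_mul_mem_exteriorPower (m : M) {k : ℕ} {x : ExteriorAlgebra R M}
    (hx : x ∈ ⋀[R]^k M) : ι R m * x ∈ ⋀[R]^(k + 1) M := by
  rw [exteriorPower, pow_succ']
  exact Submodule.mul_mem_mul ⟨m, rfl⟩ hx

theorem contractLeft_mem_exteriorPower (d : Module.Dual R M) :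
    ∀ (k : ℕ) {x : ExteriorAlgebra R M}, x ∈ ⋀[R]^(k + 1) M → contractLeft d x ∈ ⋀[R]^k M
  | 0, x, hx => by
    rw [exteriorPower, zero_add, pow_one] at hx
    obtain ⟨m, rfl⟩ := hx
    rw [contractLeft_ι]
    exact Submodule.algebraMap_mem _
  | k + 1, x, hx => by
    rw [exteriorPower, pow_succ'] at hx
    induction hx using Submodule.mul_induction_on' with
    | mem_mul_mem a ha b hb =>
      obtain ⟨m, rfl⟩ := ha
      rw [contractLeft_ι_mul]
      exact sub_mem (Submodule.smul_mem _ _ hb)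
        (ι_mul_mem_exteriorPower m (contractLeft_mem_exteriorPower d k hb))
    | add a _ b _ ha hb => exact map_add (contractLeft d) a b ▸ add_mem ha hb

theorem contractLeft_eq_zero_of_mem_exteriorPower_zero (d : Module.Dual R M)
    {x : ExteriorAlgebra R M} (hx : x ∈ ⋀[R]^0 M) : contractLeft d x = 0 := by
  rw [exteriorPower, pow_zero, Submodule.mem_one] at hx
  obtain ⟨r, rfl⟩ := hx
  exact contractLeft_algebraMap _ d r

theorem zeroEquiv_comp_restrict_contractLeft (d : Module.Dual R M) :
    exteriorPower.zeroEquiv R M ∘ₗ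
        (contractLeft d).restrict (fun _ hx => contractLeft_mem_exteriorPower d 0 hx) =
      d ∘ₗ exteriorPower.oneEquiv R M := by
  ext v
  have hv : (contractLeft d).restrict (fun _ hx => contractLeft_mem_exteriorPower d 0 hx)
      (exteriorPower.ιMulti R 1 v) =
      d (v 0) • exteriorPower.ιMulti R 0 Fin.elim0 := by
    ext
    simp [ιMulti_succ_apply, ιMulti_zero_apply, contractLeft_ι, Algebra.algebraMap_eq_smul_one]
  simp [hv]

theorem map_zeroEquiv_range_restrict_contractLeft (d : Module.Dual R M) :
    (LinearMap.range ((contractLeft d).restrict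
      fun _ hx => contractLeft_mem_exteriorPower d 0 hx)).map
        (exteriorPower.zeroEquiv R M).toLinearMap = LinearMap.range d := by
  rw [← LinearMap.range_comp, zeroEquiv_comp_restrict_contractLeft,
    LinearMap.range_comp_of_range_eq_top _ (LinearEquiv.range _)]

variable (R M) in
def exteriorPowerInt : ℤ → Submodule R (ExteriorAlgebra R M)
  | (k : ℕ) => ⋀[R]^k M
  | Int.negSucc _ => ⊥

theorem contractLeft_mem_exteriorPowerInt (d : Module.Dual R M) {j : ℤ}
    {x : ExteriorAlgebra R M} (hx : x ∈ exteriorPowerInt R M (j + 1)) :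
    contractLeft d x ∈ exteriorPowerInt R M j := by
  rcases j with k | _ | k
  · exact contractLeft_mem_exteriorPower d k hx
  · change x ∈ ⋀[R]^0 M at hx
    rw [contractLeft_eq_zero_of_mem_exteriorPower_zero d hx]
    exact zero_mem _
  · change x ∈ (⊥ : Submodule R _) at hx
    rw [(Submodule.mem_bot R).mp hx, map_zero]
    exact zero_mem _

theorem ι_mul_mem_exteriorPowerInt (m : M) {j : ℤ} {x : ExteriorAlgebra R M}
    (hx : x ∈ exteriorPowerInt R M j) : ι R m * x ∈ exteriorPowerInt R M (j + 1) := by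
  rcases j with k | k
  · exact ι_mul_mem_exteriorPower m (k := k) hx
  · change x ∈ (⊥ : Submodule R _) at hx
    rw [(Submodule.mem_bot R).mp hx, mul_zero]
    exact zero_mem _

instance [Module.Free R M] (j : ℤ) : Module.Free R (exteriorPowerInt R M j) := by
  rcases j with k | k
  · exact inferInstanceAs (Module.Free R (⋀[R]^k M))
  · exact Module.Free.of_subsingleton R (⊥ : Submodule R (ExteriorAlgebra R M))

instance [Module.Finite R M] (j : ℤ) : Module.Finite R (exteriorPowerInt R M j) := by
  rcases j with k | k
  · exact inferInstanceAs (Module.Finite R (⋀[R]^k M))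
  · exact inferInstanceAs (Module.Finite R (⊥ : Submodule R (ExteriorAlgebra R M)))

theorem subsingleton_exteriorPowerInt {ι : Type*} [LinearOrder ι] [Fintype ι]
    (b : Module.Basis ι R M) {j : ℤ} (hj : j < 0 ∨ Fintype.card ι < j) :
    Subsingleton (exteriorPowerInt R M j) := by
  rcases j with k | k
  · exact exteriorPower.subsingleton_of_card_lt b (by rw [Int.ofNat_eq_natCast] at hj; omega)
  · exact inferInstanceAs (Subsingleton (⊥ : Submodule R (ExteriorAlgebra R M)))

end ExteriorAlgebra

section Koszul

variable {R M : Type u} [CommRing R] [AddCommGroup M] [Module R M]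

noncomputable def koszulComplex (d : Module.Dual R M) : ChainComplex (ModuleCat.{u} R) ℤ where
  X j := ModuleCat.of R (exteriorPowerInt R M j)
  d i j := if h : i = j + 1 then
      ModuleCat.ofHom ((contractLeft d).restrict fun _ hx =>
        contractLeft_mem_exteriorPowerInt d (h ▸ hx))
    else 0
  shape i j hij := dif_neg (Ne.symm hij)
  d_comp_d' i j k hij hjk := by
    simp only [ComplexShape.down_Rel] at hij hjk
    rw [dif_pos hij.symm, dif_pos hjk.symm]
    ext x
    exact contractLeft_contractLeft d _

namespace koszulComplex

instance [Module.Free R M] (d : Module.Dual R M) (j : ℤ) : Module.Free R ((koszulComplex d).X j) :=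
  inferInstanceAs (Module.Free R (exteriorPowerInt R M j))

instance [Module.Finite R M] (d : Module.Dual R M) (j : ℤ) :
    Module.Finite R ((koszulComplex d).X j) :=
  inferInstanceAs (Module.Finite R (exteriorPowerInt R M j))

/-- Contraction is a derivation: `d⌋(ι m * x) + ι m * (d⌋x) = d m • x`. -/
noncomputable def smulHomotopy (d : Module.Dual R M) (m : M) :
    Homotopy (d m • 𝟙 (koszulComplex d)) 0 where
  hom i j := if h : j = i + 1 then
      ModuleCat.ofHom ((LinearMap.mulLeft R (ι R m)).restrict
        fun _ hx => h ▸ ι_mul_mem_exteriorPowerInt m hx)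
    else 0
  zero i j hij := dif_neg fun h => hij h.symm
  comm i := by
    rw [dNext_eq _ (show (ComplexShape.down ℤ).Rel i (i - 1) by simp),
      prevD_eq _ (show (ComplexShape.down ℤ).Rel (i + 1) i by simp)]
    simp only [koszulComplex, sub_add_cancel, ↓reduceDIte]
    ext x
    change d m • x.1 = ι R m * contractLeft d x.1 + contractLeft d (ι R m * x.1) + 0
    rw [contractLeft_ι_mul, add_zero, add_sub_cancel]

theorem smul_homology_eq_zero (d : Module.Dual R M) (m : M) (j : ℤ)
    (x : (koszulComplex d).homology j) : d m • x = 0 := by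
  have h := (smulHomotopy d m).homologyMap_eq j
  rw [HomologicalComplex.homologyMap_smul, HomologicalComplex.homologyMap_id,
    HomologicalComplex.homologyMap_zero] at h
  simpa only [ModuleCat.hom_smul, ModuleCat.hom_id, ModuleCat.hom_zero, LinearMap.smul_apply,
    LinearMap.id_apply, LinearMap.zero_apply] using congr(($h).hom x)

theorem range_le_annihilator_homology (d : Module.Dual R M) (j : ℤ) :
    LinearMap.range d ≤ Module.annihilator R ((koszulComplex d).homology j) := by
  rintro _ ⟨m, rfl⟩
  exact Module.mem_annihilator.mpr (smul_homology_eq_zero d m j)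

theorem d_zero_neg_one (d : Module.Dual R M) : (koszulComplex d).d 0 (-1) = 0 :=
  have : Subsingleton ((koszulComplex d).X (-1)) :=
    inferInstanceAs (Subsingleton (⊥ : Submodule R (ExteriorAlgebra R M)))
  (ModuleCat.isZero_of_subsingleton _).eq_of_tgt _ _

noncomputable def homologyZeroEquiv (d : Module.Dual R M) :
    (koszulComplex d).homology 0 ≃ₗ[R] R ⧸ LinearMap.range d :=
  ((koszulComplex d).homologyIsoSc' 1 0 (-1) (by simp) (by simp) ≪≫
    ((koszulComplex d).sc' 1 0 (-1)).asIsoHomologyι (d_zero_neg_one d) ≪≫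
    ((koszulComplex d).sc' 1 0 (-1)).moduleCatOpcyclesIso).toLinearEquiv.trans
    (Submodule.Quotient.equiv _ _ (exteriorPower.zeroEquiv R M)
      (map_zeroEquiv_range_restrict_contractLeft d))

end koszulComplex

end Koszul

section

variable {R : Type*} [CommRing R]

theorem Module.exists_surjective_pi_quotient_of_le_annihilator (N : Type*) [AddCommGroup N]
    [Module R N] [Module.Finite R N] {I : Ideal R} (hI : I ≤ Module.annihilator R N) :
    ∃ (m : ℕ) (φ : (Fin m → R ⧸ I) →ₗ[R] N), Function.Surjective φ := by
  obtain ⟨m, f, hf⟩ := Module.Finite.exists_fin' R N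
  have hker : Submodule.pi Set.univ (fun _ : Fin m => I) ≤ LinearMap.ker f := fun v hv => by
    rw [LinearMap.mem_ker, LinearMap.pi_apply_eq_sum_univ f v]
    exact Finset.sum_eq_zero fun i _ => Module.mem_annihilator.mp (hI (hv i trivial)) _
  refine ⟨m, (Submodule.liftQ _ f hker) ∘ₗ (Submodule.quotientPi fun _ => I).symm.toLinearMap,
    ?_⟩
  have hlift : Function.Surjective (Submodule.liftQ _ f hker) :=
    .of_comp (g := Submodule.mkQ _) (by rwa [← LinearMap.coe_comp, Submodule.liftQ_mkQ])
  exact hlift.comp (LinearEquiv.surjective _)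

theorem Ideal.le_annihilator_pi_quotient (I : Ideal R) (ι : Type*) :
    I ≤ Module.annihilator R (ι → R ⧸ I) := fun r hr =>
  Module.mem_annihilator.mpr fun v => funext fun i =>
    Module.mem_annihilator.mp (by rwa [Ideal.annihilator_quotient]) (v i)

end

section ModulePredicate

variable (R : Type u) [CommRing R]

def IsIsoInvariant (P : ∀ (M : Type u) [AddCommGroup M] [Module R M], Prop) : Prop :=
  ∀ (M N : Type u) [AddCommGroup M] [Module R M] [AddCommGroup N] [Module R N]
    [Module.Finite R M] [Module.Finite R N], (M ≃ₗ[R] N) → P M → P N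

def IsClosedUnderProd (P : ∀ (M : Type u) [AddCommGroup M] [Module R M], Prop) : Prop :=
  ∀ (M N : Type u) [AddCommGroup M] [Module R M] [AddCommGroup N] [Module R N]
    [Module.Finite R M] [Module.Finite R N], P M → P N → P (M × N)

def IsClosedUnderCokernel (P : ∀ (M : Type u) [AddCommGroup M] [Module R M], Prop) : Prop :=
  ∀ (M N : Type u) [AddCommGroup M] [Module R M] [AddCommGroup N] [Module R N]
    [Module.Finite R M] [Module.Finite R N] (f : M →ₗ[R] N),
    P M → P N → P (N ⧸ LinearMap.range f)

variable {R} {P : ∀ (M : Type u) [AddCommGroup M] [Module R M], Prop}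

theorem prop_of_subsingleton (hiso : IsIsoInvariant R P) (hcoker : IsClosedUnderCokernel R P)
    (W : Type u) [AddCommGroup W] [Module R W] [Module.Finite R W] (hW : P W)
    (Z : Type u) [AddCommGroup Z] [Module R Z] [Module.Finite R Z] [Subsingleton Z] : P Z := by
  have : Subsingleton (W ⧸ LinearMap.range (LinearMap.id : W →ₗ[R] W)) := by
    rw [LinearMap.range_id]
    infer_instance
  exact hiso _ _ (LinearEquiv.ofSubsingleton _ _) (hcoker W W LinearMap.id hW hW)

theorem prop_pi (hiso : IsIsoInvariant R P) (hsum : IsClosedUnderProd R P)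
    (hcoker : IsClosedUnderCokernel R P)
    (Q : Type u) [AddCommGroup Q] [Module R Q] [Module.Finite R Q] (hQ : P Q) :
    ∀ m : ℕ, P (Fin m → Q)
  | 0 => prop_of_subsingleton hiso hcoker Q hQ _
  | m + 1 => hiso _ _ (Fin.consLinearEquiv R fun _ : Fin (m + 1) => Q)
      (hsum _ _ hQ (prop_pi hiso hsum hcoker Q hQ m))

theorem prop_of_le_annihilator [IsNoetherianRing R] (hiso : IsIsoInvariant R P)
    (hsum : IsClosedUnderProd R P) (hcoker : IsClosedUnderCokernel R P) {I : Ideal R}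
    (hI : P (R ⧸ I)) (N : Type u) [AddCommGroup N] [Module R N] [Module.Finite R N]
    (hN : I ≤ Module.annihilator R N) : P N := by
  obtain ⟨m, φ, hφ⟩ := Module.exists_surjective_pi_quotient_of_le_annihilator N hN
  have hker : I ≤ Module.annihilator R (LinearMap.ker φ) :=
    (I.le_annihilator_pi_quotient (Fin m)).trans
      ((LinearMap.ker φ).subtype.annihilator_le_of_injective Subtype.val_injective)
  obtain ⟨k, ψ, hψ⟩ := Module.exists_surjective_pi_quotient_of_le_annihilator _ hker
  have hrange : LinearMap.range ((LinearMap.ker φ).subtype ∘ₗ ψ) = LinearMap.ker φ := by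
    rw [LinearMap.range_comp, LinearMap.range_eq_top.mpr hψ, Submodule.map_top,
      Submodule.range_subtype]
  exact hiso _ _ ((Submodule.quotEquivOfEq _ _ hrange).trans (φ.quotKerEquivOfSurjective hφ))
    (hcoker _ _ _ (prop_pi hiso hsum hcoker _ hI k) (prop_pi hiso hsum hcoker _ hI m))

end ModulePredicate

/-- Let `R` be commutative noetherian and `P` an isomorphism-invariant predicate on
finitely generated modules closed under finite direct sums and cokernels. For every
cyclic module `M` with `P M` there is a bounded chain complex `X` of finitely generated
free `R`-modules whose zeroth homology is isomorphic to `M` and all of whose homologies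
satisfy `P`. -/
theorem exists_perfect_complex_of_cyclic
    (R : Type u) [CommRing R] [IsNoetherianRing R]
    (P : ∀ (M : Type u) [AddCommGroup M] [Module R M], Prop)
    (hiso : ∀ (M N : Type u) [AddCommGroup M] [Module R M] [AddCommGroup N] [Module R N]
      [Module.Finite R M] [Module.Finite R N], (M ≃ₗ[R] N) → P M → P N)
    (hsum : ∀ (M N : Type u) [AddCommGroup M] [Module R M] [AddCommGroup N] [Module R N]
      [Module.Finite R M] [Module.Finite R N], P M → P N → P (M × N))
    (hcoker : ∀ (M N : Type u) [AddCommGroup M] [Module R M] [AddCommGroup N] [Module R N]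
      [Module.Finite R M] [Module.Finite R N] (f : M →ₗ[R] N),
      P M → P N → P (N ⧸ LinearMap.range f))
    (M : Type u) [AddCommGroup M] [Module R M]
    (hcyc : ∃ x : M, Submodule.span R {x} = ⊤)
    (hM : P M) :
    ∃ X : ChainComplex (ModuleCat.{u} R) ℤ,
      (∀ j : ℤ, Module.Free R (X.X j) ∧ Module.Finite R (X.X j)) ∧
      (∃ s : Finset ℤ, ∀ j ∉ s, Subsingleton (X.X j)) ∧
      (Nonempty ((X.homology 0 : Type u) ≃ₗ[R] M)) ∧
      (∀ j : ℤ, P (X.homology j)) := by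
  obtain ⟨x, hx⟩ := hcyc
  have : Module.Finite R M := ⟨⟨{x}, by simpa using hx⟩⟩
  let I := LinearMap.ker (LinearMap.toSpanSingleton R M x)
  have eM : (R ⧸ I) ≃ₗ[R] M := LinearMap.quotKerEquivOfSurjective _ <| by
    rw [← LinearMap.range_eq_top, ← LinearMap.span_singleton_eq_range, hx]
  obtain ⟨n, a, ha⟩ := Submodule.fg_iff_exists_fin_generating_family.mp (IsNoetherian.noetherian I)
  let d : Module.Dual R (Fin n → R) := Fintype.linearCombination R a
  have hd : LinearMap.range d = I := by rw [Fintype.range_linearCombination, ha]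
  refine ⟨koszulComplex d, fun j => ⟨inferInstance, inferInstance⟩,
    ⟨Finset.Icc 0 n, fun j hj => subsingleton_exteriorPowerInt (Pi.basisFun R (Fin n))
      (by rw [Finset.mem_Icc] at hj; simp only [Fintype.card_fin]; omega)⟩,
    ⟨(koszulComplex.homologyZeroEquiv d).trans ((Submodule.quotEquivOfEq _ _ hd).trans eM)⟩,
    fun j => ?_⟩
  have := (koszulComplex d).moduleFinite_homology j
  exact prop_of_le_annihilator hiso hsum hcoker (hiso _ _ eM.symm hM) _
    (hd ▸ koszulComplex.range_le_annihilator_homology d j)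
end
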